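/- arXiv:2410.19961 — 5 statements merged into one kernel-verified Lean document; each statement's English description precedes it below -/
import Mathlib

section
/- If two semi-standard linked tableaux pairs have equal exponent vectors (i.e., the monomials they determine are equal), then the two pairs are equal. -/
open scoped BigOperators

lemma mono_eq_of_card_eq {C : ℕ} {α : Type*} [LinearOrder α] [DecidableEq α]
    (f g : Fin C → α) (hf : Monotone f) (hg : Monotone g)
    (h : ∀ a, (Finset.univ.filter fun c => f c = a).card
         = (Finset.univ.filter fun c => g c = a).card) : f = g := by
  classical
  apply List.ofFn_injective
  have hmult : ∀ (f : Fin C → α), (↑(List.ofFn f) : Multiset α)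
      = Multiset.map f Finset.univ.val := by
    intro f
    rw [List.ofFn_eq_map]
    rfl
  refine List.Perm.eq_of_sortedLE hf.sortedLE_ofFn hg.sortedLE_ofFn ?_
  rw [← Multiset.coe_eq_coe, hmult, hmult]
  ext a
  rw [Multiset.count_map, Multiset.count_map]
  have e1 : (fun c => a = f c) = fun c => f c = a := funext fun c => propext eq_comm
  have e2 : (fun c => a = g c) = fun c => g c = a := funext fun c => propext eq_comm
  simp only [e1, e2]
  simpa [Finset.card, Finset.filter] using h a

lemma card_filter_congr {β : Type*} {s : Finset β} {p q : β → Prop}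
    [DecidablePred p] [DecidablePred q] (h : ∀ x ∈ s, p x ↔ q x) :
    (s.filter p).card = (s.filter q).card := by
  rw [Finset.card_filter, Finset.card_filter]
  exact Finset.sum_congr rfl fun x hx => if_congr (h x hx) rfl rfl

/-- A linked pair of tableaux for the Kronecker quiver with `n` arrows and dimension
vector `(r1, r2)`: `Tm` is the tableau `T⁻` of shape `r1 × c1` with labels `ik`
(`i ∈ Fin n`, `k ∈ Fin r2`), `Tp` is the tableau `T⁺` of shape `r2 × c2` with labels `ij`
(`j ∈ Fin r1`), and `link` is a bijection of boxes taking a label `iq` in row `p` of `T⁻`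
to a label `ip` in row `q` of `T⁺`. -/
structure LinkedPair (n r1 r2 c1 c2 : ℕ) where
  Tm : Fin r1 → Fin c1 → Fin n × Fin r2
  Tp : Fin r2 → Fin c2 → Fin n × Fin r1
  link : (Fin r1 × Fin c1) ≃ (Fin r2 × Fin c2)
  link_row : ∀ p c, (link (p, c)).1 = (Tm p c).2
  link_label : ∀ p c, Tp (link (p, c)).1 (link (p, c)).2 = ((Tm p c).1, p)

/-- Rows weakly increasing and columns strictly increasing. -/
def IsSSYT {R C : ℕ} {α : Type*} [Preorder α] (T : Fin R → Fin C → α) : Prop :=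
  (∀ j, Monotone (T j)) ∧ (∀ c, StrictMono fun j => T j c)

/-- A linked pair is semi-standard if both tableaux are semi-standard with respect to
the lexicographic order on the double labels. -/
def LinkedPair.SemiStandard {n r1 r2 c1 c2 : ℕ} (P : LinkedPair n r1 r2 c1 c2) : Prop :=
  IsSSYT (fun p c => toLex (P.Tm p c)) ∧ IsSSYT (fun q c => toLex (P.Tp q c))

/-- The exponent vector of `Mon(T⁺)`: `v i j k` is the number of labels `ik` in row `j`
of `T⁺`. -/
def LinkedPair.expVec {n r1 r2 c1 c2 : ℕ} (P : LinkedPair n r1 r2 c1 c2) :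
    Fin n → Fin r2 → Fin r1 → ℕ :=
  fun i j k => (Finset.univ.filter fun c => P.Tp j c = (i, k)).card

lemma LinkedPair.tm_count {n r1 r2 c1 c2 : ℕ} (P : LinkedPair n r1 r2 c1 c2)
    (p : Fin r1) (i : Fin n) (q : Fin r2) :
    (Finset.univ.filter fun c => P.Tm p c = (i, q)).card = P.expVec i q p := by
  classical
  unfold LinkedPair.expVec
  apply Finset.card_bij (fun c _ => (P.link (p, c)).2)
  · intro c hc
    simp only [Finset.mem_filter, Finset.mem_univ, true_and] at hc ⊢
    have hr := P.link_row p c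
    have hl := P.link_label p c
    rw [hc] at hr hl
    simp only at hr
    rw [hr] at hl
    rw [hl]
  · intro c hc c' hc' hcc
    simp only [Finset.mem_filter, Finset.mem_univ, true_and] at hc hc'
    have h1 : (P.link (p, c)).1 = (P.link (p, c')).1 := by
      rw [P.link_row, P.link_row, hc, hc']
    have heq : P.link (p, c) = P.link (p, c') := Prod.ext h1 hcc
    have := P.link.injective heq
    exact congrArg Prod.snd this
  · intro d hd
    simp only [Finset.mem_filter, Finset.mem_univ, true_and] at hd
    obtain ⟨⟨p', c⟩, hlx⟩ : ∃ x, P.link x = (q, d) :=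
      ⟨P.link.symm (q, d), P.link.apply_symm_apply _⟩
    have hr := P.link_row p' c
    have hl := P.link_label p' c
    rw [hlx] at hr hl
    simp only at hr hl
    rw [hd] at hl
    have h1 : i = (P.Tm p' c).1 := congrArg Prod.fst hl
    have h2 : p = p' := congrArg Prod.snd hl
    subst h2
    refine ⟨c, ?_, ?_⟩
    · simp only [Finset.mem_filter, Finset.mem_univ, true_and]
      exact Prod.ext h1.symm hr.symm
    · rw [hlx]

/-- If two semi-standard linked tableaux pairs have equal exponent vectors, then the two
pairs (i.e. their tableaux) are equal. -/
theorem stmt0 (n r1 r2 c1 c2 : ℕ) (P Q : LinkedPair n r1 r2 c1 c2)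
    (hP : P.SemiStandard) (hQ : Q.SemiStandard)
    (h : P.expVec = Q.expVec) : P.Tp = Q.Tp ∧ P.Tm = Q.Tm := by
  constructor
  · funext q c
    have key : (fun c => toLex (P.Tp q c)) = fun c => toLex (Q.Tp q c) := by
      apply mono_eq_of_card_eq _ _ (hP.2.1 q) (hQ.2.1 q)
      intro a
      have hfin : ∀ (R : LinkedPair n r1 r2 c1 c2),
          (Finset.univ.filter fun c => toLex (R.Tp q c) = a).card
            = R.expVec (ofLex a).1 q (ofLex a).2 := by
        intro R
        refine (card_filter_congr fun c _ => ?_).trans rfl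
        constructor
        · intro hc
          exact toLex.injective hc
        · intro hc
          exact congrArg toLex hc
      refine ((@card_filter_congr _ _ _ _ _ _ fun c _ => Iff.rfl).trans (hfin P)).trans ?_
      rw [h]
      exact ((@card_filter_congr _ _ _ _ _ _ fun c _ => Iff.rfl).trans (hfin Q)).symm
    exact toLex.injective (congrFun key c)
  · funext p c
    have key : (fun c => toLex (P.Tm p c)) = fun c => toLex (Q.Tm p c) := by
      apply mono_eq_of_card_eq _ _ (hP.1.1 p) (hQ.1.1 p)
      intro a
      have hfin : ∀ (R : LinkedPair n r1 r2 c1 c2),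
          (Finset.univ.filter fun c => toLex (R.Tm p c) = a).card
            = R.expVec (ofLex a).1 (ofLex a).2 p := by
        intro R
        refine (card_filter_congr fun c _ => ?_).trans
          (R.tm_count p (ofLex a).1 (ofLex a).2)
        constructor
        · intro hc
          exact toLex.injective hc
        · intro hc
          exact congrArg toLex hc
      refine ((@card_filter_congr _ _ _ _ _ _ fun c _ => Iff.rfl).trans (hfin P)).trans ?_
      rw [h]
      exact ((@card_filter_congr _ _ _ _ _ _ fun c _ => Iff.rfl).trans (hfin Q)).symm
    exact toLex.injective (congrFun key c)
end

section
/- The cone generated by the exponent vectors of all semi-standard linked tableaux pairs is a finitely generated (polyhedral rational) cone, equal to the intersection of finitely many rational half-spaces given by nonnegativity, row-sum equalities, and the semi-standardness inequalities. -/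
open scoped BigOperators

/-- The ambient real vector space `ℝ^{n·r1·r2}`. -/
abbrev RV (n r1 r2 : ℕ) := Fin n → Fin r2 → Fin r1 → ℝ

/-- The set of (real) exponent vectors of semi-standard linked tableaux pairs. -/
def ssVectors (n r1 r2 : ℕ) : Set (RV n r1 r2) :=
  {v | ∃ (c1 c2 : ℕ) (P : LinkedPair n r1 r2 c1 c2), P.SemiStandard ∧
        ∀ i j k, v i j k = (P.expVec i j k : ℝ)}

/-- The cone `C^n_{r1 r2}` generated by the exponent vectors of all semi-standard linked
tableaux pairs. -/
def ssCone (n r1 r2 : ℕ) : PointedCone ℝ (RV n r1 r2) :=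
  Submodule.span {c : ℝ // 0 ≤ c} (ssVectors n r1 r2)

namespace SSaux

open Finset

abbrev IV (n r1 r2 : ℕ) := Fin n → Fin r2 → Fin r1 → ℤ

variable {n r1 r2 : ℕ}

noncomputable def castIV (g : IV n r1 r2) : RV n r1 r2 := fun i j k => (g i j k : ℝ)

def pairZ (c g : IV n r1 r2) : ℤ := ∑ i, ∑ j, ∑ k, c i j k * g i j k

noncomputable def pairR (c : IV n r1 r2) (x : RV n r1 r2) : ℝ :=
  ∑ i, ∑ j, ∑ k, (c i j k : ℝ) * x i j k

lemma pairR_castIV (c g : IV n r1 r2) : pairR c (castIV g) = (pairZ c g : ℤ) := by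
  simp only [pairR, pairZ, castIV]
  push_cast
  rfl

lemma pairR_add (c : IV n r1 r2) (x y : RV n r1 r2) :
    pairR c (x + y) = pairR c x + pairR c y := by
  simp [pairR, mul_add, Finset.sum_add_distrib]

lemma pairR_smul (c : IV n r1 r2) (r : ℝ) (x : RV n r1 r2) :
    pairR c (r • x) = r * pairR c x := by
  simp [pairR, Finset.mul_sum]
  congr 1; ext i; congr 1; ext j; congr 1; ext k; ring

lemma pairR_sum {β : Type*} (c : IV n r1 r2) (s : Finset β) (h : β → RV n r1 r2) :
    pairR c (∑ b ∈ s, h b) = ∑ b ∈ s, pairR c (h b) := by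
  classical
  induction s using Finset.induction_on with
  | empty => simp [pairR]
  | @insert a s' hb ih => rw [Finset.sum_insert hb, pairR_add, ih, Finset.sum_insert hb]

/-- half-space as a pointed cone -/
def hsSub (c : IV n r1 r2) : Submodule {t : ℝ // 0 ≤ t} (RV n r1 r2) where
  carrier := {x | 0 ≤ pairR c x}
  add_mem' := by
    intro x y hx hy
    simp only [Set.mem_setOf_eq] at *
    rw [pairR_add]; positivity
  zero_mem' := by
    simp [Set.mem_setOf_eq, pairR]
  smul_mem' := by
    intro a x hx
    simp only [Set.mem_setOf_eq] at *
    rw [← Nonneg.coe_smul, pairR_smul]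
    exact mul_nonneg a.2 hx

end SSaux

namespace SSaux
open Finset
variable {n r1 r2 : ℕ}

local notation "S" => {t : ℝ // 0 ≤ t}

lemma smul_mem_nonneg {M : Type*} [AddCommMonoid M] [Module ℝ M]
    {p : Submodule S M} {r : ℝ} (hr : 0 ≤ r) {x : M} (hx : x ∈ p) : r • x ∈ p := by
  have := p.smul_mem ⟨r, hr⟩ hx
  rwa [Nonneg.mk_smul] at this

def comb (c g t : IV n r1 r2) : IV n r1 r2 :=
  fun i j k => pairZ c g * t i j k + (- pairZ c t) * g i j k

lemma pairZ_lin (c' t g : IV n r1 r2) (A B : ℤ) :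
    pairZ c' (fun i j k => A * t i j k + B * g i j k) = A * pairZ c' t + B * pairZ c' g := by
  unfold pairZ
  rw [Finset.mul_sum, Finset.mul_sum, ← Finset.sum_add_distrib]
  refine Finset.sum_congr rfl fun i _ => ?_
  rw [Finset.mul_sum, Finset.mul_sum, ← Finset.sum_add_distrib]
  refine Finset.sum_congr rfl fun j _ => ?_
  rw [Finset.mul_sum, Finset.mul_sum, ← Finset.sum_add_distrib]
  refine Finset.sum_congr rfl fun k _ => ?_
  ring

lemma pairZ_comb (c' c g t : IV n r1 r2) :
    pairZ c' (comb c g t) = pairZ c g * pairZ c' t + (- pairZ c t) * pairZ c' g :=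
  pairZ_lin c' t g (pairZ c g) (- pairZ c t)

lemma castIV_comb (c g t : IV n r1 r2) :
    castIV (comb c g t) =
      ((pairZ c g : ℤ) : ℝ) • castIV t + ((-(pairZ c t) : ℤ) : ℝ) • castIV g := by
  funext i j k
  simp only [castIV, comb, Pi.add_apply, Pi.smul_apply, smul_eq_mul]
  push_cast
  ring

lemma FMstep (c : IV n r1 r2) (G : Finset (IV n r1 r2)) :
    ∃ G' : Finset (IV n r1 r2),
      (∀ g' ∈ G', 0 ≤ pairZ c g' ∧
        ∀ c' : IV n r1 r2, (∀ g ∈ G, 0 ≤ pairZ c' g) → 0 ≤ pairZ c' g') ∧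
      ((Submodule.span S (castIV '' (G' : Set (IV n r1 r2)))) : Set (RV n r1 r2)) =
        ((Submodule.span S (castIV '' (G : Set (IV n r1 r2)))) : Set (RV n r1 r2)) ∩
          {x | 0 ≤ pairR c x} := by
  classical
  set Gp := G.filter (fun g => 0 ≤ pairZ c g) with hGp
  set Gn := G.filter (fun g => pairZ c g < 0) with hGn
  refine ⟨Gp ∪ (Gp ×ˢ Gn).image (fun gt => comb c gt.1 gt.2), ?_, ?_⟩
  · intro g' hg'
    rcases Finset.mem_union.1 hg' with h | h
    · rw [Finset.mem_filter] at h
      exact ⟨h.2, fun c' hc' => hc' g' h.1⟩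
    · rcases Finset.mem_image.1 h with ⟨⟨g, t⟩, hgt, rfl⟩
      rcases Finset.mem_product.1 hgt with ⟨hg, ht⟩
      rw [Finset.mem_filter] at hg ht
      constructor
      · rw [pairZ_comb]; exact le_of_eq (by ring)
      · intro c' hc'
        rw [pairZ_comb]
        have h1 : 0 ≤ pairZ c g * pairZ c' t := mul_nonneg hg.2 (hc' t ht.1)
        have h2 : 0 ≤ (- pairZ c t) * pairZ c' g := by
          have := hc' g hg.1
          nlinarith [ht.2]
        linarith
  · apply subset_antisymm
    · -- span G' ⊆ span G ∩ halfspace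
      have : (Submodule.span S (castIV '' ((Gp ∪ (Gp ×ˢ Gn).image (fun gt => comb c gt.1 gt.2) : Finset _) : Set (IV n r1 r2)))) ≤
          (Submodule.span S (castIV '' (G : Set (IV n r1 r2)))) ⊓ hsSub c := by
        rw [Submodule.span_le]
        rintro y ⟨g', hg', rfl⟩
        rcases Finset.mem_coe.1 hg' with hg'
        rcases Finset.mem_union.1 hg' with h | h
        · rw [Finset.mem_filter] at h
          refine ⟨Submodule.subset_span ⟨g', h.1, rfl⟩, ?_⟩
          show (0:ℝ) ≤ pairR c (castIV g')
          rw [pairR_castIV]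
          exact_mod_cast h.2
        · rcases Finset.mem_image.1 h with ⟨⟨g, t⟩, hgt, rfl⟩
          rcases Finset.mem_product.1 hgt with ⟨hg, ht⟩
          rw [Finset.mem_filter] at hg ht
          constructor
          · rw [castIV_comb]
            refine Submodule.add_mem _ ?_ ?_
            · exact smul_mem_nonneg (by exact_mod_cast hg.2)
                (Submodule.subset_span ⟨t, ht.1, rfl⟩)
            · exact smul_mem_nonneg (by exact_mod_cast (neg_nonneg.2 ht.2.le))
                (Submodule.subset_span ⟨g, hg.1, rfl⟩)
          · show (0:ℝ) ≤ pairR c (castIV (comb c g t))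
            rw [pairR_castIV, pairZ_comb]
            push_cast
            exact le_of_eq (by ring)
      intro x hx
      have h2 := this hx
      rw [Submodule.mem_inf] at h2
      exact ⟨h2.1, h2.2⟩
    · -- span G ∩ halfspace ⊆ span G'
      rintro x ⟨hx1, hx2⟩
      simp only [Set.mem_setOf_eq] at hx2
      set T : Set (RV n r1 r2) :=
        castIV '' ((Gp ∪ (Gp ×ˢ Gn).image (fun gt => comb c gt.1 gt.2) : Finset _) : Set (IV n r1 r2)) with hT
      show x ∈ Submodule.span S T
      -- representation of x
      have hx1' : x ∈ Submodule.span S ((G.image castIV : Finset (RV n r1 r2)) : Set (RV n r1 r2)) := by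
        rwa [Finset.coe_image]
      obtain ⟨f, -, hf⟩ := Submodule.mem_span_finset.1 hx1'
      set F := G.image castIV with hF
      set a : RV n r1 r2 → ℝ := fun y => (f y : ℝ) with ha'
      have ha : ∀ y, 0 ≤ a y := fun y => (f y).2
      have hx : ∑ y ∈ F, a y • y = x := hf
      set Fp := F.filter (fun y => 0 ≤ pairR c y) with hFp
      set Fn := F.filter (fun y => pairR c y < 0) with hFn
      have hsplit : x = ∑ y ∈ Fp, a y • y + ∑ y ∈ Fn, a y • y := by
        rw [← hx, ← Finset.sum_filter_add_sum_filter_not F (fun y => 0 ≤ pairR c y)]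
        congr 1
        apply Finset.sum_congr _ (fun _ _ => rfl)
        apply Finset.filter_congr
        intro y _
        simp [not_le]
      set P := ∑ y ∈ Fp, a y * pairR c y with hPdef
      set N := ∑ t ∈ Fn, a t * (-(pairR c t)) with hNdef
      have hP : 0 ≤ P := Finset.sum_nonneg fun y hy =>
        mul_nonneg (ha y) (Finset.mem_filter.1 hy).2
      have hN : 0 ≤ N := Finset.sum_nonneg fun t ht => by
        have := (Finset.mem_filter.1 ht).2
        have := ha t
        nlinarith
      have hPN : pairR c x = P - N := by
        rw [hsplit, pairR_add, pairR_sum, pairR_sum]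
        simp only [pairR_smul]
        have hneg : N = -∑ t ∈ Fn, a t * pairR c t := by
          rw [hNdef, ← Finset.sum_neg_distrib]
          exact Finset.sum_congr rfl fun t _ => by ring
        rw [hPdef, hneg]
        ring
      have hNP : N ≤ P := by linarith
      -- membership helpers
      have memFp : ∀ y ∈ Fp, y ∈ Submodule.span S T := by
        intro y hy
        rw [hFp, Finset.mem_filter, hF] at hy
        obtain ⟨hyF, hy2⟩ := hy
        rcases Finset.mem_image.1 hyF with ⟨g, hg, rfl⟩
        apply Submodule.subset_span
        refine ⟨g, ?_, rfl⟩
        rw [Finset.mem_coe, Finset.mem_union]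
        left
        rw [Finset.mem_filter]
        refine ⟨hg, ?_⟩
        rw [pairR_castIV] at hy2
        exact_mod_cast hy2
      have memU : ∀ y ∈ Fp, ∀ t ∈ Fn,
          (pairR c y) • t + (-(pairR c t)) • y ∈ Submodule.span S T := by
        intro y hy t ht
        rw [hFp, Finset.mem_filter, hF] at hy
        rw [hFn, Finset.mem_filter, hF] at ht
        obtain ⟨hyF, hy2⟩ := hy
        obtain ⟨htF, ht2⟩ := ht
        rcases Finset.mem_image.1 hyF with ⟨g, hg, rfl⟩
        rcases Finset.mem_image.1 htF with ⟨t0, ht0, rfl⟩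
        rw [pairR_castIV] at hy2 ht2
        have : (pairR c (castIV g)) • (castIV t0) + (-(pairR c (castIV t0))) • (castIV g)
            = castIV (comb c g t0) := by
          rw [castIV_comb, pairR_castIV, pairR_castIV]
          push_cast
          ring_nf
        rw [this]
        apply Submodule.subset_span
        refine ⟨comb c g t0, ?_, rfl⟩
        rw [Finset.mem_coe, Finset.mem_union]
        right
        apply Finset.mem_image.2
        refine ⟨(g, t0), ?_, rfl⟩
        rw [Finset.mem_product, Finset.mem_filter, Finset.mem_filter]
        constructor
        · exact ⟨hg, by exact_mod_cast hy2⟩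
        · exact ⟨ht0, by exact_mod_cast ht2⟩
      by_cases hN0 : N = 0
      · -- all negative-part coefficients vanish
        have hz : ∀ t ∈ Fn, a t = 0 := by
          intro t ht
          have hnn : ∀ t' ∈ Fn, (0:ℝ) ≤ a t' * -(pairR c t') := by
            intro t' ht'
            have h1 := (Finset.mem_filter.1 ht').2
            exact mul_nonneg (ha t') (by linarith)
          have h0 : a t * -(pairR c t) = 0 :=
            (Finset.sum_eq_zero_iff_of_nonneg hnn).1 hN0 t ht
          have hpos : 0 < -(pairR c t) := by
            have := (Finset.mem_filter.1 ht).2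
            linarith
          rcases mul_eq_zero.1 h0 with h | h
          · exact h
          · linarith
        have hxp : x = ∑ y ∈ Fp, a y • y := by
          rw [hsplit]
          have : ∑ y ∈ Fn, a y • y = 0 :=
            Finset.sum_eq_zero fun t ht => by rw [hz t ht, zero_smul]
          rw [this, add_zero]
        rw [hxp]
        exact Submodule.sum_mem _ fun y hy => smul_mem_nonneg (ha y) (memFp y hy)
      · have hN' : 0 < N := lt_of_le_of_ne hN (Ne.symm hN0)
        have hP' : 0 < P := lt_of_lt_of_le hN' hNP
        have key : ∑ y ∈ Fp, (a y * (P - N) / P) • y +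
            ∑ p ∈ Fp ×ˢ Fn, ((a p.1 * a p.2) / P) •
              ((pairR c p.1) • p.2 + (-(pairR c p.2)) • p.1) = x := by
          have expand : ∀ p : RV n r1 r2 × RV n r1 r2,
              ((a p.1 * a p.2) / P) • ((pairR c p.1) • p.2 + (-(pairR c p.2)) • p.1)
              = ((a p.1 * a p.2 / P) * pairR c p.1) • p.2 +
                ((a p.1 * a p.2 / P) * (-(pairR c p.2))) • p.1 := by
            intro p
            rw [smul_add, smul_smul, smul_smul]
          calc ∑ y ∈ Fp, (a y * (P - N) / P) • y +
              ∑ p ∈ Fp ×ˢ Fn, ((a p.1 * a p.2) / P) •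
                ((pairR c p.1) • p.2 + (-(pairR c p.2)) • p.1)
              = ∑ y ∈ Fp, (a y * (P - N) / P) • y +
                (∑ y ∈ Fp, ∑ t ∈ Fn, ((a y * a t / P) * pairR c y) • t +
                 ∑ y ∈ Fp, ∑ t ∈ Fn, ((a y * a t / P) * (-(pairR c t))) • y) := by
                congr 1
                rw [Finset.sum_product]
                rw [← Finset.sum_add_distrib]
                apply Finset.sum_congr rfl
                intro y _
                rw [← Finset.sum_add_distrib]
                apply Finset.sum_congr rfl
                intro t _
                exact expand (y, t)
            _ = ∑ y ∈ Fp, (a y * (P - N) / P) • y +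
                (∑ t ∈ Fn, a t • t + ∑ y ∈ Fp, (a y * N / P) • y) := by
                congr 1
                congr 1
                · rw [Finset.sum_comm]
                  apply Finset.sum_congr rfl
                  intro t ht
                  rw [← Finset.sum_smul]
                  congr 1
                  have : ∑ y ∈ Fp, a y * a t / P * pairR c y
                      = (a t / P) * ∑ y ∈ Fp, a y * pairR c y := by
                    rw [Finset.mul_sum]
                    apply Finset.sum_congr rfl
                    intro y _
                    ring
                  rw [this, ← hPdef, div_mul_cancel₀ _ (ne_of_gt hP')]
                · apply Finset.sum_congr rfl
                  intro y _
                  rw [← Finset.sum_smul]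
                  congr 1
                  have : ∑ t ∈ Fn, a y * a t / P * (-(pairR c t))
                      = (a y / P) * ∑ t ∈ Fn, a t * (-(pairR c t)) := by
                    rw [Finset.mul_sum]
                    apply Finset.sum_congr rfl
                    intro t _
                    ring
                  rw [this, ← hNdef]
                  ring
            _ = ∑ y ∈ Fp, a y • y + ∑ t ∈ Fn, a t • t := by
                rw [← add_assoc, add_comm (∑ y ∈ Fp, (a y * (P - N) / P) • y)]
                rw [add_assoc, add_comm (∑ t ∈ Fn, a t • t)]
                congr 1
                rw [← Finset.sum_add_distrib]
                apply Finset.sum_congr rfl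
                intro y _
                rw [← add_smul]
                congr 1
                field_simp
                ring
            _ = x := hsplit.symm
        rw [← key]
        apply Submodule.add_mem
        · exact Submodule.sum_mem _ fun y hy => smul_mem_nonneg
            (div_nonneg (mul_nonneg (ha y) (by linarith)) hP'.le) (memFp y hy)
        · refine Submodule.sum_mem _ fun p hp => ?_
          rcases Finset.mem_product.1 hp with ⟨hp1, hp2⟩
          exact smul_mem_nonneg
            (div_nonneg (mul_nonneg (ha p.1) (ha p.2)) hP'.le)
            (memU p.1 hp1 p.2 hp2)

end SSaux

namespace SSaux
open Finset
variable {n r1 r2 : ℕ}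

local notation "S" => {t : ℝ // 0 ≤ t}

def dlt (t : Fin n × Fin r2 × Fin r1) : IV n r1 r2 :=
  fun i j k => if i = t.1 ∧ j = t.2.1 ∧ k = t.2.2 then 1 else 0

def ndlt (t : Fin n × Fin r2 × Fin r1) : IV n r1 r2 :=
  fun i j k => if i = t.1 ∧ j = t.2.1 ∧ k = t.2.2 then -1 else 0

lemma top_spanned :
    ∀ x : RV n r1 r2, x ∈ Submodule.span S
      (castIV '' (((univ.image (dlt : _ → IV n r1 r2)) ∪ (univ.image ndlt) : Finset (IV n r1 r2)) : Set (IV n r1 r2))) := by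
  intro x
  have hx : x = ∑ t : Fin n × Fin r2 × Fin r1,
      ((max (x t.1 t.2.1 t.2.2) 0) • castIV (dlt t) +
       (max (-(x t.1 t.2.1 t.2.2)) 0) • castIV (ndlt t)) := by
    funext i j k
    have h1 : (∑ t : Fin n × Fin r2 × Fin r1,
        ((max (x t.1 t.2.1 t.2.2) 0) • castIV (dlt t) +
         (max (-(x t.1 t.2.1 t.2.2)) 0) • castIV (ndlt t))) i j k
        = ∑ t : Fin n × Fin r2 × Fin r1,
        ((max (x t.1 t.2.1 t.2.2) 0) * castIV (dlt t) i j k +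
         (max (-(x t.1 t.2.1 t.2.2)) 0) * castIV (ndlt t) i j k) := by
      rw [Finset.sum_apply, Finset.sum_apply, Finset.sum_apply]
      rfl
    rw [h1, Finset.sum_eq_single (i, j, k)]
    · simp [castIV, dlt, ndlt]
      have := max_zero_sub_max_neg_zero_eq_self (x i j k)
      linarith
    · intro t _ ht
      have : ¬(i = t.1 ∧ j = t.2.1 ∧ k = t.2.2) := by
        rintro ⟨rfl, rfl, rfl⟩
        exact ht rfl
      simp [castIV, dlt, ndlt, this]
    · intro h
      exact absurd (Finset.mem_univ _) h
  rw [hx]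
  refine Submodule.sum_mem _ fun t _ => Submodule.add_mem _ ?_ ?_
  · exact smul_mem_nonneg (le_max_right _ _)
      (Submodule.subset_span ⟨dlt t, by simp [Finset.mem_union], rfl⟩)
  · exact smul_mem_nonneg (le_max_right _ _)
      (Submodule.subset_span ⟨ndlt t, by simp [Finset.mem_union], rfl⟩)

theorem FMmain (s : Finset (IV n r1 r2)) :
    ∃ G : Finset (IV n r1 r2),
      (∀ g ∈ G, ∀ c ∈ s, 0 ≤ pairZ c g) ∧
      ((Submodule.span S (castIV '' (G : Set (IV n r1 r2)))) : Set (RV n r1 r2)) =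
        {x | ∀ c ∈ s, 0 ≤ pairR c x} := by
  classical
  induction s using Finset.induction_on with
  | empty =>
    refine ⟨(univ.image dlt) ∪ (univ.image ndlt), by simp, ?_⟩
    ext x
    simp only [Finset.notMem_empty, false_implies, implies_true, Set.mem_setOf_eq, iff_true]
    exact top_spanned x
  | @insert c s hc ih =>
    obtain ⟨G, hG1, hG2⟩ := ih
    obtain ⟨G', hG'1, hG'2⟩ := FMstep c G
    refine ⟨G', ?_, ?_⟩
    · intro g hg c' hc'
      rcases Finset.mem_insert.1 hc' with rfl | hc'
      · exact (hG'1 g hg).1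
      · exact (hG'1 g hg).2 c' (fun g' hg' => hG1 g' hg' c' hc')
    · rw [hG'2, hG2]
      ext x
      simp only [Set.mem_inter_iff, Set.mem_setOf_eq, Finset.mem_insert]
      constructor
      · rintro ⟨h1, h2⟩ c' hc'
        rcases hc' with rfl | hc'
        · exact h2
        · exact h1 c' hc'
      · intro h
        exact ⟨fun c' hc' => h c' (Or.inr hc'), h c (Or.inl rfl)⟩

end SSaux

namespace SSaux
open Finset

lemma strictMono_of_adj {R : ℕ} {α : Type*} [Preorder α] (f : Fin R → α)
    (h : ∀ a b : Fin R, (a : ℕ) + 1 = (b : ℕ) → f a < f b) : StrictMono f := by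
  have key : ∀ d : ℕ, ∀ a b : Fin R, (b : ℕ) = (a : ℕ) + d + 1 → f a < f b := by
    intro d
    induction d with
    | zero => intro a b hb; exact h a b (by omega)
    | succ d ih =>
      intro a b hb
      have hbR := b.isLt
      have hm : (a : ℕ) + d + 1 < R := by omega
      exact lt_trans (ih a ⟨(a : ℕ) + d + 1, hm⟩ rfl) (h ⟨(a : ℕ) + d + 1, hm⟩ b (by simp; omega))
  intro a b hab
  exact key ((b : ℕ) - (a : ℕ) - 1) a b (by omega)

lemma exists_monotone_counts {α : Type*} [LinearOrder α] [Fintype α]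
    (f : α → ℕ) (C : ℕ) (hC : ∑ y, f y = C) :
    ∃ g : Fin C → α, Monotone g ∧
      ∀ y, (univ.filter fun c => g c = y).card = f y := by
  classical
  have hcard : Fintype.card (Σ y : α, Fin (f y)) = Fintype.card (Fin C) := by
    simp [Fintype.card_sigma, hC]
  let e : Fin C ≃ (Σ y : α, Fin (f y)) := (Fintype.equivOfCardEq hcard).symm
  let g0 : Fin C → α := fun c => (e c).1
  have hfib0 : ∀ y, (univ.filter fun c => g0 c = y).card = f y := by
    intro y
    have h1 : (univ.filter fun c => g0 c = y).card
        = (univ.filter fun s : Σ y : α, Fin (f y) => s.1 = y).card := by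
      apply Finset.card_bij (fun c _ => e c)
      · intro c hc
        simp only [Finset.mem_filter, Finset.mem_univ, true_and] at hc ⊢
        exact hc
      · intro c1 _ c2 _ hee
        exact e.injective hee
      · intro s hs
        refine ⟨e.symm s, ?_, by simp⟩
        simp only [Finset.mem_filter, Finset.mem_univ, true_and] at hs ⊢
        simpa [g0] using hs
    have h2 : f y = (univ.filter fun s : Σ y : α, Fin (f y) => s.1 = y).card := by
      rw [← Fintype.card_fin (f y), ← Finset.card_univ]
      apply Finset.card_bij (fun b _ => (⟨y, b⟩ : Σ y : α, Fin (f y)))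
      · intro b _
        simp
      · intro b1 _ b2 _ hb
        simpa using hb
      · rintro ⟨y', b⟩ hs
        simp only [Finset.mem_filter, Finset.mem_univ, true_and] at hs
        subst hs
        exact ⟨b, Finset.mem_univ _, rfl⟩
    rw [h1, ← h2]
  refine ⟨g0 ∘ Tuple.sort g0, Tuple.monotone_sort g0, ?_⟩
  intro y
  rw [← hfib0 y]
  apply Finset.card_bij (fun c _ => Tuple.sort g0 c)
  · intro c hc
    simp only [Finset.mem_filter, Finset.mem_univ, true_and, Function.comp] at hc ⊢
    exact hc
  · intro c1 _ c2 _ hee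
    exact (Tuple.sort g0).injective hee
  · intro c' hc'
    refine ⟨(Tuple.sort g0).symm c', ?_, by simp⟩
    simp only [Finset.mem_filter, Finset.mem_univ, true_and, Function.comp] at hc' ⊢
    simpa using hc'

lemma card_filter_comp {C : ℕ} {α : Type*} [Fintype α] [DecidableEq α]
    (g : Fin C → α) (p : α → Prop) [DecidablePred p] :
    (univ.filter fun c => p (g c)).card
      = ∑ y : α, if p y then (univ.filter fun c => g c = y).card else 0 := by
  rw [Finset.card_eq_sum_card_fiberwise
    (f := g) (t := univ.filter p)
    (fun c hc => by
      simp only [Finset.mem_coe, Finset.mem_filter, Finset.mem_univ, true_and] at hc ⊢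
      exact hc)]
  rw [Finset.sum_filter]
  refine Finset.sum_congr rfl fun y _ => ?_
  by_cases hp : p y
  · simp only [hp, if_true]
    congr 1
    ext c
    simp only [Finset.mem_filter, Finset.mem_univ, true_and]
    constructor
    · rintro ⟨_, h⟩; exact h
    · intro h; exact ⟨by rw [h]; exact hp, h⟩
  · simp [hp]

lemma cum_of_strict {R C : ℕ} {α : Type*} [LinearOrder α] (T : Fin R → Fin C → α)
    (hcol : ∀ c, StrictMono fun j => T j c) {j1 j2 : Fin R} (h12 : j1 < j2) (x : α) :
    (univ.filter fun c => T j2 c ≤ x).card ≤ (univ.filter fun c => T j1 c < x).card := by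
  apply Finset.card_le_card
  intro c hc
  simp only [Finset.mem_filter, Finset.mem_univ, true_and] at hc ⊢
  exact lt_of_lt_of_le (hcol c h12) hc

lemma strict_of_cum {C : ℕ} {α : Type*} [LinearOrder α] (g1 g2 : Fin C → α)
    (h1 : Monotone g1) (h2 : Monotone g2)
    (hcum : ∀ x, (univ.filter fun c => g2 c ≤ x).card
      ≤ (univ.filter fun c => g1 c < x).card) :
    ∀ c, g1 c < g2 c := by
  intro c
  by_contra hcon
  push_neg at hcon
  set x := g2 c with hx
  have hle : (c : ℕ) + 1 ≤ (univ.filter fun c' => g2 c' ≤ x).card := by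
    have hsub : Finset.Iic c ⊆ univ.filter fun c' => g2 c' ≤ x := by
      intro c' hc'
      rw [Finset.mem_Iic] at hc'
      simp only [Finset.mem_filter, Finset.mem_univ, true_and]
      exact h2 hc'
    calc (c : ℕ) + 1 = (Finset.Iic c).card := (Fin.card_Iic c).symm
      _ ≤ _ := Finset.card_le_card hsub
  have hge : (univ.filter fun c' => g1 c' < x).card ≤ (c : ℕ) := by
    have hsub : (univ.filter fun c' => g1 c' < x) ⊆ Finset.Iio c := by
      intro c' hc'
      simp only [Finset.mem_filter, Finset.mem_univ, true_and] at hc'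
      rw [Finset.mem_Iio]
      by_contra hcc
      push_neg at hcc
      exact absurd (lt_of_le_of_lt (le_trans hcon (h1 hcc)) hc') (lt_irrefl _)
    calc _ ≤ (Finset.Iio c).card := Finset.card_le_card hsub
      _ = (c : ℕ) := Fin.card_Iio c
  have := hcum x
  omega

end SSaux

namespace SSaux
open Finset
variable {n r1 r2 : ℕ}

def rowPF (j0 : Fin r2) : IV n r1 r2 := fun _ j _ => if j = j0 then 1 else 0

def rowMF (k0 : Fin r1) : IV n r1 r2 := fun _ _ k => if k = k0 then 1 else 0

def colPF (j1 j2 : Fin r2) (x : Lex (Fin n × Fin r1)) : IV n r1 r2 := fun i j k =>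
  if (j1 : ℕ) + 1 = (j2 : ℕ) then
    (if j = j1 ∧ toLex (i, k) < x then 1 else 0) -
      (if j = j2 ∧ toLex (i, k) ≤ x then 1 else 0)
  else 0

def colMF (p1 p2 : Fin r1) (x : Lex (Fin n × Fin r2)) : IV n r1 r2 := fun i j k =>
  if (p1 : ℕ) + 1 = (p2 : ℕ) then
    (if k = p1 ∧ toLex (i, j) < x then 1 else 0) -
      (if k = p2 ∧ toLex (i, j) ≤ x then 1 else 0)
  else 0

def sFinset (n r1 r2 : ℕ) : Finset (IV n r1 r2) :=
  (univ.image (dlt : _ → IV n r1 r2)) ∪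
  (univ.image fun t : Fin r2 × Fin r2 => (rowPF t.1 - rowPF t.2 : IV n r1 r2)) ∪
  (univ.image fun t : Fin r1 × Fin r1 => (rowMF t.1 - rowMF t.2 : IV n r1 r2)) ∪
  (univ.image fun t : Fin r2 × Fin r2 × Lex (Fin n × Fin r1) => colPF t.1 t.2.1 t.2.2) ∪
  (univ.image fun t : Fin r1 × Fin r1 × Lex (Fin n × Fin r2) => colMF t.1 t.2.1 t.2.2)

lemma dlt_mem (t : Fin n × Fin r2 × Fin r1) : dlt t ∈ sFinset n r1 r2 := by
  simp only [sFinset, Finset.mem_union, Finset.mem_image]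
  exact Or.inl (Or.inl (Or.inl (Or.inl ⟨t, mem_univ t, rfl⟩)))

lemma rowP_mem (j j' : Fin r2) : (rowPF j - rowPF j' : IV n r1 r2) ∈ sFinset n r1 r2 := by
  simp only [sFinset, Finset.mem_union, Finset.mem_image]
  exact Or.inl (Or.inl (Or.inl (Or.inr ⟨(j, j'), mem_univ _, rfl⟩)))

lemma rowM_mem (k k' : Fin r1) : (rowMF k - rowMF k' : IV n r1 r2) ∈ sFinset n r1 r2 := by
  simp only [sFinset, Finset.mem_union, Finset.mem_image]
  exact Or.inl (Or.inl (Or.inr ⟨(k, k'), mem_univ _, rfl⟩))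

lemma colP_mem (j1 j2 : Fin r2) (x : Lex (Fin n × Fin r1)) :
    colPF j1 j2 x ∈ sFinset n r1 r2 := by
  simp only [sFinset, Finset.mem_union, Finset.mem_image]
  exact Or.inl (Or.inr ⟨(j1, j2, x), mem_univ _, rfl⟩)

lemma colM_mem (p1 p2 : Fin r1) (x : Lex (Fin n × Fin r2)) :
    colMF p1 p2 x ∈ sFinset n r1 r2 := by
  simp only [sFinset, Finset.mem_union, Finset.mem_image]
  exact Or.inr ⟨(p1, p2, x), mem_univ _, rfl⟩

lemma pz_dlt (t : Fin n × Fin r2 × Fin r1) (w : IV n r1 r2) :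
    pairZ (dlt t) w = w t.1 t.2.1 t.2.2 := by
  simp [pairZ, dlt, ite_and, ite_mul, one_mul, zero_mul, Finset.sum_ite_eq']

lemma pz_sub (a b w : IV n r1 r2) : pairZ (a - b) w = pairZ a w - pairZ b w := by
  simp [pairZ, Pi.sub_apply, sub_mul, Finset.sum_sub_distrib]

lemma pz_rowP (j0 : Fin r2) (w : IV n r1 r2) :
    pairZ (rowPF j0) w = ∑ i, ∑ k, w i j0 k := by
  simp only [pairZ, rowPF, ite_mul, one_mul, zero_mul]
  refine Finset.sum_congr rfl fun i _ => ?_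
  rw [Finset.sum_comm]
  refine Finset.sum_congr rfl fun k _ => ?_
  simp [Finset.sum_ite_eq']

lemma pz_rowM (k0 : Fin r1) (w : IV n r1 r2) :
    pairZ (rowMF k0) w = ∑ i, ∑ j, w i j k0 := by
  simp only [pairZ, rowMF, ite_mul, one_mul, zero_mul]
  refine Finset.sum_congr rfl fun i _ => Finset.sum_congr rfl fun j _ => ?_
  simp [Finset.sum_ite_eq']

lemma pz_indP (j0 : Fin r2) (Q : Fin n → Fin r1 → Prop) [∀ i k, Decidable (Q i k)] (w : IV n r1 r2) :
    pairZ (fun i j k => if j = j0 ∧ Q i k then 1 else 0) w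
      = ∑ i, ∑ k, if Q i k then w i j0 k else 0 := by
  simp only [pairZ, ite_mul, one_mul, zero_mul, ite_and]
  refine Finset.sum_congr rfl fun i _ => ?_
  rw [Finset.sum_comm]
  refine Finset.sum_congr rfl fun k _ => ?_
  rw [Finset.sum_ite_eq' univ j0 (fun j => if Q i k then w i j k else 0)]
  simp

lemma pz_indM (p0 : Fin r1) (Q : Fin n → Fin r2 → Prop) [∀ i j, Decidable (Q i j)] (w : IV n r1 r2) :
    pairZ (fun i j k => if k = p0 ∧ Q i j then 1 else 0) w
      = ∑ i, ∑ j, if Q i j then w i j p0 else 0 := by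
  simp only [pairZ, ite_mul, one_mul, zero_mul, ite_and]
  refine Finset.sum_congr rfl fun i _ => Finset.sum_congr rfl fun j _ => ?_
  rw [Finset.sum_ite_eq' univ p0 (fun k => if Q i j then w i j k else 0)]
  simp

lemma colPF_eq (j1 j2 : Fin r2) (x : Lex (Fin n × Fin r1)) (h : (j1 : ℕ) + 1 = (j2 : ℕ)) :
    colPF j1 j2 x = (fun i j k => if j = j1 ∧ toLex (i, k) < x then 1 else 0) -
      (fun i j k => if j = j2 ∧ toLex (i, k) ≤ x then 1 else 0) := by
  funext i j k
  simp [colPF, h]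

lemma colMF_eq (p1 p2 : Fin r1) (x : Lex (Fin n × Fin r2)) (h : (p1 : ℕ) + 1 = (p2 : ℕ)) :
    colMF p1 p2 x = (fun i j k => if k = p1 ∧ toLex (i, j) < x then 1 else 0) -
      (fun i j k => if k = p2 ∧ toLex (i, j) ≤ x then 1 else 0) := by
  funext i j k
  simp [colMF, h]

lemma card_row {R C m : ℕ} (T : Fin R → Fin C → Fin n × Fin m) (j : Fin R)
    (p : Lex (Fin n × Fin m) → Prop) [DecidablePred p] :
    (univ.filter fun c => p (toLex (T j c))).card
      = ∑ i, ∑ k, if p (toLex (i, k)) then (univ.filter fun c => T j c = (i, k)).card else 0 := by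
  rw [card_filter_comp (fun c => toLex (T j c)) p]
  rw [← Equiv.sum_comp (toLex : (Fin n × Fin m) ≃ Lex (Fin n × Fin m))
    (fun y => if p y then (univ.filter fun c => toLex (T j c) = y).card else 0)]
  rw [Fintype.sum_prod_type]
  refine Finset.sum_congr rfl fun i _ => Finset.sum_congr rfl fun k _ => ?_
  have : (univ.filter fun c => toLex (T j c) = toLex (i, k))
      = (univ.filter fun c => T j c = (i, k)) := by
    apply Finset.filter_congr
    intro c _
    exact toLex_inj
  rw [this]

end SSaux

namespace SSaux
open Finset
variable {n r1 r2 : ℕ}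

lemma expVec_def {c1 c2 : ℕ} (P : LinkedPair n r1 r2 c1 c2) (i : Fin n) (j : Fin r2) (k : Fin r1) :
    P.expVec i j k = (univ.filter fun c => P.Tp j c = (i, k)).card := rfl

lemma expVec_row_sum {c1 c2 : ℕ} (P : LinkedPair n r1 r2 c1 c2) (j : Fin r2) :
    ∑ i, ∑ k, P.expVec i j k = c2 := by
  have h := Finset.card_eq_sum_card_fiberwise
    (f := P.Tp j) (s := univ) (t := univ) (fun c _ => mem_univ _)
  rw [card_univ, Fintype.card_fin, Fintype.sum_prod_type] at h
  exact h.symm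

lemma Tm_count {c1 c2 : ℕ} (P : LinkedPair n r1 r2 c1 c2) (i : Fin n) (p : Fin r1) (q : Fin r2) :
    (univ.filter fun c => P.Tm p c = (i, q)).card = P.expVec i q p := by
  rw [expVec_def]
  apply Finset.card_bij (fun c _ => (P.link (p, c)).2)
  · intro c hc
    simp only [mem_filter, mem_univ, true_and] at hc ⊢
    have hr := P.link_row p c
    have hl := P.link_label p c
    rw [hc] at hr hl
    simp only at hr hl
    rw [hr] at hl
    simpa using hl
  · intro a ha b hb hab
    simp only [mem_filter, mem_univ, true_and] at ha hb
    have hra := P.link_row p a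
    have hrb := P.link_row p b
    rw [ha] at hra
    rw [hb] at hrb
    have : P.link (p, a) = P.link (p, b) := by
      apply Prod.ext
      · rw [hra, hrb]
      · exact hab
    have := P.link.injective this
    exact (Prod.ext_iff.1 this).2
  · intro c' hc'
    simp only [mem_filter, mem_univ, true_and] at hc'
    obtain ⟨z, hz⟩ : ∃ z, P.link z = (q, c') := ⟨P.link.symm (q, c'), P.link.apply_symm_apply _⟩
    obtain ⟨p', cc⟩ := z
    have hr := P.link_row p' cc
    have hl := P.link_label p' cc
    rw [hz] at hr hl
    simp only at hr hl
    rw [hc'] at hl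
    have hp' : p' = p := (Prod.ext_iff.1 hl).2.symm
    have hi : (P.Tm p' cc).1 = i := (Prod.ext_iff.1 hl).1.symm
    subst hp'
    refine ⟨cc, ?_, ?_⟩
    · simp only [mem_filter, mem_univ, true_and]
      apply Prod.ext
      · simpa using hi
      · simpa using hr.symm
    · rw [hz]
  
lemma Tm_row_sum {c1 c2 : ℕ} (P : LinkedPair n r1 r2 c1 c2) (p : Fin r1) :
    ∑ i, ∑ q, P.expVec i q p = c1 := by
  have h := Finset.card_eq_sum_card_fiberwise
    (f := P.Tm p) (s := univ) (t := univ) (fun c _ => mem_univ _)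
  rw [card_univ, Fintype.card_fin, Fintype.sum_prod_type] at h
  refine Eq.trans ?_ h.symm
  refine Finset.sum_congr rfl fun i _ => Finset.sum_congr rfl fun q _ => (Tm_count P i p q).symm

lemma forward {c1 c2 : ℕ} (P : LinkedPair n r1 r2 c1 c2) (hP : P.SemiStandard) :
    ∀ c ∈ sFinset n r1 r2, 0 ≤ pairZ c (fun i j k => (P.expVec i j k : ℤ)) := by
  intro c hc
  set w : IV n r1 r2 := fun i j k => (P.expVec i j k : ℤ) with hw
  have hrowP : ∀ j : Fin r2, ∑ i, ∑ k, w i j k = (c2 : ℤ) := by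
    intro j
    rw [hw]
    push_cast [← expVec_row_sum P j]
    rfl
  have hrowM : ∀ p : Fin r1, ∑ i, ∑ q, w i q p = (c1 : ℤ) := by
    intro p
    rw [hw]
    push_cast [← Tm_row_sum P p]
    rfl
  simp only [sFinset, Finset.mem_union, Finset.mem_image] at hc
  rcases hc with ((((⟨t, _, rfl⟩ | ⟨t, _, rfl⟩) | ⟨t, _, rfl⟩) | ⟨t, _, rfl⟩) | ⟨t, _, rfl⟩)
  · rw [pz_dlt]
    exact Int.ofNat_nonneg _
  · rw [pz_sub, pz_rowP, pz_rowP, hrowP, hrowP, sub_self]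
  · rw [pz_sub, pz_rowM, pz_rowM, hrowM, hrowM, sub_self]
  · obtain ⟨j1, j2, x⟩ := t
    dsimp only
    by_cases hadj : (j1 : ℕ) + 1 = (j2 : ℕ)
    · rw [colPF_eq _ _ _ hadj, pz_sub, pz_indP, pz_indP]
      rw [sub_nonneg]
      have h1 : ∑ i, ∑ k, (if toLex (i, k) ≤ x then w i j2 k else 0)
          = ((univ.filter fun c => toLex (P.Tp j2 c) ≤ x).card : ℤ) := by
        rw [card_row (P.Tp) j2 (fun y => y ≤ x)]
        push_cast
        exact Finset.sum_congr rfl fun i _ => Finset.sum_congr rfl fun k _ => by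
          split <;> simp [hw, expVec_def]
      have h2 : ∑ i, ∑ k, (if toLex (i, k) < x then w i j1 k else 0)
          = ((univ.filter fun c => toLex (P.Tp j1 c) < x).card : ℤ) := by
        rw [card_row (P.Tp) j1 (fun y => y < x)]
        push_cast
        exact Finset.sum_congr rfl fun i _ => Finset.sum_congr rfl fun k _ => by
          split <;> simp [hw, expVec_def]
      rw [h1, h2]
      have hlt : j1 < j2 := by
        rw [Fin.lt_def]; omega
      exact_mod_cast cum_of_strict (fun q c => toLex (P.Tp q c)) hP.2.2 hlt x
    · simp [colPF, pairZ, hadj]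
  · obtain ⟨p1, p2, x⟩ := t
    dsimp only
    by_cases hadj : (p1 : ℕ) + 1 = (p2 : ℕ)
    · rw [colMF_eq _ _ _ hadj, pz_sub, pz_indM, pz_indM]
      rw [sub_nonneg]
      have h1 : ∑ i, ∑ q, (if toLex (i, q) ≤ x then w i q p2 else 0)
          = ((univ.filter fun c => toLex (P.Tm p2 c) ≤ x).card : ℤ) := by
        rw [card_row (P.Tm) p2 (fun y => y ≤ x)]
        push_cast
        refine Finset.sum_congr rfl fun i _ => Finset.sum_congr rfl fun q _ => ?_
        split <;> simp [hw, ← Tm_count P i p2 q]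
      have h2 : ∑ i, ∑ q, (if toLex (i, q) < x then w i q p1 else 0)
          = ((univ.filter fun c => toLex (P.Tm p1 c) < x).card : ℤ) := by
        rw [card_row (P.Tm) p1 (fun y => y < x)]
        push_cast
        refine Finset.sum_congr rfl fun i _ => Finset.sum_congr rfl fun q _ => ?_
        split <;> simp [hw, ← Tm_count P i p1 q]
      rw [h1, h2]
      have hlt : p1 < p2 := by
        rw [Fin.lt_def]; omega
      exact_mod_cast cum_of_strict (fun p c => toLex (P.Tm p c)) hP.1.2 hlt x
    · simp [colMF, pairZ, hadj]

end SSaux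

namespace SSaux
open Finset
variable {n r1 r2 : ℕ}

def zeroPair (n r1 r2 : ℕ) : LinkedPair n r1 r2 0 0 where
  Tm := fun _ c => c.elim0
  Tp := fun _ c => c.elim0
  link := Equiv.equivOfIsEmpty _ _
  link_row := fun _ c => c.elim0
  link_label := fun _ c => c.elim0

lemma zeroPair_ss : (zeroPair n r1 r2).SemiStandard := by
  constructor <;>
    exact ⟨fun j => by intro a b _; exact a.elim0, fun c => c.elim0⟩

lemma backward (g : IV n r1 r2) (hg : ∀ c ∈ sFinset n r1 r2, 0 ≤ pairZ c g) :
    castIV g ∈ ssVectors n r1 r2 := by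
  classical
  have hpos : ∀ i j k, 0 ≤ g i j k := by
    intro i j k
    have := hg (dlt (i, j, k)) (dlt_mem _)
    rwa [pz_dlt] at this
  rcases Nat.eq_zero_or_pos r1 with hr1 | hr1
  · exact ⟨0, 0, zeroPair n r1 r2, zeroPair_ss,
      fun i j k => absurd k.isLt (by omega)⟩
  rcases Nat.eq_zero_or_pos r2 with hr2 | hr2
  · exact ⟨0, 0, zeroPair n r1 r2, zeroPair_ss,
      fun i j k => absurd j.isLt (by omega)⟩
  set v : Fin n → Fin r2 → Fin r1 → ℕ := fun i j k => (g i j k).toNat with hvdef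
  have hvg : ∀ i j k, ((v i j k : ℤ)) = g i j k := fun i j k =>
    Int.toNat_of_nonneg (hpos i j k)
  have hrowPZ : ∀ j j' : Fin r2, (∑ i, ∑ k, g i j k) = ∑ i, ∑ k, g i j' k := by
    intro j j'
    have h1 := hg _ (rowP_mem j j')
    have h2 := hg _ (rowP_mem j' j)
    rw [pz_sub, pz_rowP, pz_rowP] at h1 h2
    omega
  have hrowMZ : ∀ p p' : Fin r1, (∑ i, ∑ q, g i q p) = ∑ i, ∑ q, g i q p' := by
    intro p p'
    have h1 := hg _ (rowM_mem p p')
    have h2 := hg _ (rowM_mem p' p)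
    rw [pz_sub, pz_rowM, pz_rowM] at h1 h2
    omega
  have hcast : ∀ j : Fin r2, ((∑ i, ∑ k, v i j k : ℕ) : ℤ) = ∑ i, ∑ k, g i j k := by
    intro j
    push_cast
    exact Finset.sum_congr rfl fun i _ => Finset.sum_congr rfl fun k _ => hvg i j k
  have hcastM : ∀ p : Fin r1, ((∑ i, ∑ q, v i q p : ℕ) : ℤ) = ∑ i, ∑ q, g i q p := by
    intro p
    push_cast
    exact Finset.sum_congr rfl fun i _ => Finset.sum_congr rfl fun q _ => hvg i q p
  set j0 : Fin r2 := ⟨0, hr2⟩ with hj0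
  set p0 : Fin r1 := ⟨0, hr1⟩ with hp0
  set C2 : ℕ := ∑ i, ∑ k, v i j0 k with hC2
  set C1 : ℕ := ∑ i, ∑ q, v i q p0 with hC1
  have hc2 : ∀ j, ∑ i, ∑ k, v i j k = C2 := by
    intro j
    have := hrowPZ j j0
    have hz : ((∑ i, ∑ k, v i j k : ℕ) : ℤ) = ((C2 : ℕ) : ℤ) := by
      rw [hcast, hC2, hcast]
      exact this
    exact_mod_cast hz
  have hc1 : ∀ p, ∑ i, ∑ q, v i q p = C1 := by
    intro p
    have := hrowMZ p p0
    have hz : ((∑ i, ∑ q, v i q p : ℕ) : ℤ) = ((C1 : ℕ) : ℤ) := by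
      rw [hcastM, hC1, hcastM]
      exact this
    exact_mod_cast hz
  have hsumP : ∀ j : Fin r2,
      ∑ y : Lex (Fin n × Fin r1), v (ofLex y).1 j (ofLex y).2 = C2 := by
    intro j
    rw [← Equiv.sum_comp (toLex : (Fin n × Fin r1) ≃ Lex (Fin n × Fin r1))
      (fun y => v (ofLex y).1 j (ofLex y).2)]
    simp only [ofLex_toLex]
    rw [Fintype.sum_prod_type]
    exact hc2 j
  have hsumM : ∀ p : Fin r1,
      ∑ y : Lex (Fin n × Fin r2), v (ofLex y).1 (ofLex y).2 p = C1 := by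
    intro p
    rw [← Equiv.sum_comp (toLex : (Fin n × Fin r2) ≃ Lex (Fin n × Fin r2))
      (fun y => v (ofLex y).1 (ofLex y).2 p)]
    simp only [ofLex_toLex]
    rw [Fintype.sum_prod_type]
    exact hc1 p
  choose gp hgpm hgpf using fun j : Fin r2 =>
    exists_monotone_counts (fun y : Lex (Fin n × Fin r1) => v (ofLex y).1 j (ofLex y).2)
      C2 (hsumP j)
  choose gm hgmm hgmf using fun p : Fin r1 =>
    exists_monotone_counts (fun y : Lex (Fin n × Fin r2) => v (ofLex y).1 (ofLex y).2 p)
      C1 (hsumM p)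
  have hTpfib : ∀ (i : Fin n) (j : Fin r2) (k : Fin r1),
      (univ.filter fun c => ofLex (gp j c) = (i, k)).card = v i j k := by
    intro i j k
    have h := hgpf j (toLex (i, k))
    simp only [ofLex_toLex] at h
    rw [← h]
    congr 1
  have hTmfib : ∀ (i : Fin n) (p : Fin r1) (q : Fin r2),
      (univ.filter fun c => ofLex (gm p c) = (i, q)).card = v i q p := by
    intro i p q
    have h := hgmf p (toLex (i, q))
    simp only [ofLex_toLex] at h
    rw [← h]
    congr 1
  -- column strictness for T+
  have hadjP : ∀ j1 j2 : Fin r2, (j1 : ℕ) + 1 = (j2 : ℕ) → ∀ cc, gp j1 cc < gp j2 cc := by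
    intro j1 j2 h12
    apply strict_of_cum (gp j1) (gp j2) (hgpm j1) (hgpm j2)
    intro x
    have hfun := hg _ (colP_mem j1 j2 x)
    rw [colPF_eq _ _ _ h12, pz_sub, pz_indP, pz_indP, sub_nonneg] at hfun
    have hcard2 : (univ.filter fun cc => gp j2 cc ≤ x).card
        = ∑ i, ∑ k, if toLex (i, k) ≤ x then v i j2 k else 0 := by
      have h := card_row (fun j c => ofLex (gp j c)) j2 (fun y => y ≤ x)
      simp only [toLex_ofLex] at h
      erw [h]
      exact Finset.sum_congr rfl fun i _ => Finset.sum_congr rfl fun k _ => by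
        split
        · exact hTpfib i j2 k
        · rfl
    have hcard1 : (univ.filter fun cc => gp j1 cc < x).card
        = ∑ i, ∑ k, if toLex (i, k) < x then v i j1 k else 0 := by
      have h := card_row (fun j c => ofLex (gp j c)) j1 (fun y => y < x)
      simp only [toLex_ofLex] at h
      erw [h]
      exact Finset.sum_congr rfl fun i _ => Finset.sum_congr rfl fun k _ => by
        split
        · exact hTpfib i j1 k
        · rfl
    rw [hcard1, hcard2]
    have hZ : ((∑ i, ∑ k, if toLex (i, k) ≤ x then v i j2 k else 0 : ℕ) : ℤ)
        ≤ ((∑ i, ∑ k, if toLex (i, k) < x then v i j1 k else 0 : ℕ) : ℤ) := by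
      push_cast
      have e2 : ∀ (jj : Fin r2) (p' : Lex (Fin n × Fin r1) → Prop) [DecidablePred p'],
          (∑ i, ∑ k, if p' (toLex (i, k)) then ((v i jj k : ℤ)) else 0)
            = ∑ i, ∑ k, if p' (toLex (i, k)) then g i jj k else 0 :=
        fun jj p' _ => Finset.sum_congr rfl fun i _ => Finset.sum_congr rfl fun k _ => by
          split
          · exact hvg i jj k
          · rfl
      rw [e2 j2 (fun y => y ≤ x), e2 j1 (fun y => y < x)]
      exact hfun
    exact_mod_cast hZ
  have hadjM : ∀ p1 p2 : Fin r1, (p1 : ℕ) + 1 = (p2 : ℕ) → ∀ cc, gm p1 cc < gm p2 cc := by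
    intro p1 p2 h12
    apply strict_of_cum (gm p1) (gm p2) (hgmm p1) (hgmm p2)
    intro x
    have hfun := hg _ (colM_mem p1 p2 x)
    rw [colMF_eq _ _ _ h12, pz_sub, pz_indM, pz_indM, sub_nonneg] at hfun
    have hcard2 : (univ.filter fun cc => gm p2 cc ≤ x).card
        = ∑ i, ∑ q, if toLex (i, q) ≤ x then v i q p2 else 0 := by
      have h := card_row (fun p c => ofLex (gm p c)) p2 (fun y => y ≤ x)
      simp only [toLex_ofLex] at h
      erw [h]
      exact Finset.sum_congr rfl fun i _ => Finset.sum_congr rfl fun q _ => by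
        split
        · exact hTmfib i p2 q
        · rfl
    have hcard1 : (univ.filter fun cc => gm p1 cc < x).card
        = ∑ i, ∑ q, if toLex (i, q) < x then v i q p1 else 0 := by
      have h := card_row (fun p c => ofLex (gm p c)) p1 (fun y => y < x)
      simp only [toLex_ofLex] at h
      erw [h]
      exact Finset.sum_congr rfl fun i _ => Finset.sum_congr rfl fun q _ => by
        split
        · exact hTmfib i p1 q
        · rfl
    rw [hcard1, hcard2]
    have hZ : ((∑ i, ∑ q, if toLex (i, q) ≤ x then v i q p2 else 0 : ℕ) : ℤ)
        ≤ ((∑ i, ∑ q, if toLex (i, q) < x then v i q p1 else 0 : ℕ) : ℤ) := by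
      push_cast
      have e2 : ∀ (pp : Fin r1) (p' : Lex (Fin n × Fin r2) → Prop) [DecidablePred p'],
          (∑ i, ∑ q, if p' (toLex (i, q)) then ((v i q pp : ℤ)) else 0)
            = ∑ i, ∑ q, if p' (toLex (i, q)) then g i q pp else 0 :=
        fun pp p' _ => Finset.sum_congr rfl fun i _ => Finset.sum_congr rfl fun q _ => by
          split
          · exact hvg i q pp
          · rfl
      rw [e2 p2 (fun y => y ≤ x), e2 p1 (fun y => y < x)]
      exact hfun
    exact_mod_cast hZ
  -- the link
  set keyM : Fin r1 × Fin C1 → Fin n × Fin r1 × Fin r2 :=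
    fun z => ((ofLex (gm z.1 z.2)).1, z.1, (ofLex (gm z.1 z.2)).2) with hkeyM
  set keyP : Fin r2 × Fin C2 → Fin n × Fin r1 × Fin r2 :=
    fun z => ((ofLex (gp z.1 z.2)).1, (ofLex (gp z.1 z.2)).2, z.1) with hkeyP
  have hkM : ∀ (ti : Fin n) (tp : Fin r1) (tq : Fin r2),
      (univ.filter fun z => keyM z = (ti, tp, tq)).card = v ti tq tp := by
    intro ti tp tq
    rw [← hTmfib ti tp tq]
    apply Finset.card_bij (fun z _ => z.2)
    · intro z hz
      simp only [mem_filter, mem_univ, true_and, hkeyM] at hz ⊢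
      have e1 := congrArg Prod.fst hz
      have e2 := congrArg (fun u => u.2.1) hz
      have e3 := congrArg (fun u => u.2.2) hz
      simp only at e1 e2 e3
      rw [← e2, ← e1, ← e3]
    · intro z hz z' hz' hzz
      simp only [mem_filter, mem_univ, true_and, hkeyM] at hz hz'
      have e2 := congrArg (fun u => u.2.1) hz
      have e2' := congrArg (fun u => u.2.1) hz'
      simp only at e2 e2'
      exact Prod.ext (e2.trans e2'.symm) hzz
    · intro c hc
      simp only [mem_filter, mem_univ, true_and] at hc
      refine ⟨(tp, c), ?_, rfl⟩
      simp only [mem_filter, mem_univ, true_and, hkeyM]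
      have e1 := congrArg Prod.fst hc
      have e3 := congrArg Prod.snd hc
      simp only at e1 e3
      rw [e1, e3]
  have hkP : ∀ (ti : Fin n) (tp : Fin r1) (tq : Fin r2),
      (univ.filter fun z => keyP z = (ti, tp, tq)).card = v ti tq tp := by
    intro ti tp tq
    rw [← hTpfib ti tq tp]
    apply Finset.card_bij (fun z _ => z.2)
    · intro z hz
      simp only [mem_filter, mem_univ, true_and, hkeyP] at hz ⊢
      have e1 := congrArg Prod.fst hz
      have e2 := congrArg (fun u => u.2.1) hz
      have e3 := congrArg (fun u => u.2.2) hz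
      simp only at e1 e2 e3
      rw [← e3, ← e1, ← e2]
    · intro z hz z' hz' hzz
      simp only [mem_filter, mem_univ, true_and, hkeyP] at hz hz'
      have e3 := congrArg (fun u => u.2.2) hz
      have e3' := congrArg (fun u => u.2.2) hz'
      simp only at e3 e3'
      exact Prod.ext (e3.trans e3'.symm) hzz
    · intro c hc
      simp only [mem_filter, mem_univ, true_and] at hc
      refine ⟨(tq, c), ?_, rfl⟩
      simp only [mem_filter, mem_univ, true_and, hkeyP]
      have e1 := congrArg Prod.fst hc
      have e3 := congrArg Prod.snd hc
      simp only at e1 e3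
      rw [e1, e3]
  have hfe : ∀ t : Fin n × Fin r1 × Fin r2,
      Fintype.card {z // keyM z = t} = Fintype.card {z // keyP z = t} := by
    rintro ⟨ti, tp, tq⟩
    rw [Fintype.card_subtype, Fintype.card_subtype, hkM, hkP]
  let fe : ∀ t : Fin n × Fin r1 × Fin r2, {z // keyM z = t} ≃ {z // keyP z = t} :=
    fun t => Fintype.equivOfCardEq (hfe t)
  let link : (Fin r1 × Fin C1) ≃ (Fin r2 × Fin C2) :=
    ((Equiv.sigmaFiberEquiv keyM).symm.trans
      ((Equiv.sigmaCongrRight fe).trans (Equiv.sigmaFiberEquiv keyP)))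
  have hlink : ∀ z, keyP (link z) = keyM z := fun z => ((fe (keyM z)) ⟨z, rfl⟩).2
  -- assemble
  refine ⟨C1, C2,
    { Tm := fun p c => ofLex (gm p c)
      Tp := fun j c => ofLex (gp j c)
      link := link
      link_row := ?_
      link_label := ?_ }, ⟨⟨?_, ?_⟩, ⟨?_, ?_⟩⟩, ?_⟩
  · intro p c
    have h := hlink (p, c)
    have e3 := congrArg (fun u => u.2.2) h
    simpa [hkeyM, hkeyP] using e3
  · intro p c
    have h := hlink (p, c)
    have e1 := congrArg Prod.fst h
    have e2 := congrArg (fun u => u.2.1) h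
    simp only [hkeyM, hkeyP] at e1 e2
    exact Prod.ext e1 e2
  · -- rows of Tm monotone (in lex)
    intro p
    have := hgmm p
    intro a b hab
    simpa [toLex_ofLex] using this hab
  · -- columns of Tm strictly monotone
    intro c
    apply strictMono_of_adj
    intro a b hab
    simpa [toLex_ofLex] using hadjM a b hab c
  · intro j
    have := hgpm j
    intro a b hab
    simpa [toLex_ofLex] using this hab
  · intro c
    apply strictMono_of_adj
    intro a b hab
    simpa [toLex_ofLex] using hadjP a b hab c
  · intro i j k
    show castIV g i j k =
      (((Finset.univ.filter fun c => ofLex (gp j c) = (i, k)).card : ℕ) : ℝ)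
    rw [hTpfib i j k]
    show ((g i j k : ℤ) : ℝ) = ((v i j k : ℕ) : ℝ)
    rw [← hvg i j k]
    push_cast
    rfl

end SSaux

/-- The cone generated by the exponent vectors of all semi-standard linked tableaux pairs
is a finitely generated rational polyhedral cone: it is generated by finitely many of the
exponent vectors, and it is the intersection of finitely many rational half-spaces. -/
theorem stmt2 (n r1 r2 : ℕ) :
    (∃ G : Finset (RV n r1 r2), ↑G ⊆ ssVectors n r1 r2 ∧
      ssCone n r1 r2 = Submodule.span {c : ℝ // 0 ≤ c} (G : Set (RV n r1 r2))) ∧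
    (∃ s : Finset (Fin n → Fin r2 → Fin r1 → ℤ),
      (ssCone n r1 r2 : Set (RV n r1 r2)) =
        {x | ∀ c ∈ s, 0 ≤ ∑ i, ∑ j, ∑ k, (c i j k : ℝ) * x i j k}) := by
  classical
  obtain ⟨G, hG1, hG2⟩ := SSaux.FMmain (SSaux.sFinset n r1 r2)
  have himg : SSaux.castIV '' (G : Set (SSaux.IV n r1 r2))
      = ((G.image SSaux.castIV : Finset (RV n r1 r2)) : Set (RV n r1 r2)) :=
    (Finset.coe_image).symm
  have hGss : ((G.image SSaux.castIV : Finset (RV n r1 r2)) : Set (RV n r1 r2))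
      ⊆ ssVectors n r1 r2 := by
    intro x hx
    rw [Finset.mem_coe, Finset.mem_image] at hx
    obtain ⟨g, hg, rfl⟩ := hx
    exact SSaux.backward g (fun c hc => hG1 g hg c hc)
  have hset : ((Submodule.span {c : ℝ // 0 ≤ c}
        ((G.image SSaux.castIV : Finset (RV n r1 r2)) : Set (RV n r1 r2))
        : Submodule _ _) : Set (RV n r1 r2))
      = {x | ∀ c ∈ SSaux.sFinset n r1 r2, 0 ≤ SSaux.pairR c x} := by
    rw [← himg]
    exact hG2
  have hss_sub : ssVectors n r1 r2
      ⊆ {x | ∀ c ∈ SSaux.sFinset n r1 r2, 0 ≤ SSaux.pairR c x} := by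
    rintro x ⟨c1, c2, P, hP, hxv⟩
    intro c hc
    have hfwd := SSaux.forward P hP c hc
    have hx : x = SSaux.castIV (fun i j k => (P.expVec i j k : ℤ)) := by
      funext i j k
      rw [hxv i j k]
      simp [SSaux.castIV]
    rw [hx, SSaux.pairR_castIV]
    exact_mod_cast hfwd
  have hcone : ssCone n r1 r2 = Submodule.span {c : ℝ // 0 ≤ c}
      ((G.image SSaux.castIV : Finset (RV n r1 r2)) : Set (RV n r1 r2)) := by
    apply le_antisymm
    · rw [ssCone]
      apply Submodule.span_le.2
      intro x hxss
      rw [SetLike.mem_coe, ← SetLike.mem_coe, hset]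
      exact hss_sub hxss
    · exact Submodule.span_le.2 (hGss.trans Submodule.subset_span)
  constructor
  · exact ⟨G.image SSaux.castIV, hGss, hcone⟩
  · refine ⟨SSaux.sFinset n r1 r2, ?_⟩
    rw [hcone]
    exact hset
end

section
/- A lattice point v = (v^i_{jk}) in the nonnegative orthant of ℤ^{n r1 r2} is the exponent vector of a semi-standard linked tableaux pair if and only if: (1) all row sums Σ_{i,k} v^i_{j k} are equal across j ∈ {1,…,r2}; (2) all column sums Σ_{i,j} v^i_{j k} are equal across k ∈ {1,…,r1}; and (3) for every pair of consecutive rows j, j+1 in each of the two associated tableaux with weakly increasing rows, the partial-sum inequalities Σ_{labels sl ≤ ik−1 in row j} v ≥ Σ_{labels sl ≤ ik in row j+1} v hold for all labels ik. -/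
open scoped BigOperators

open Finset
set_option linter.unusedSectionVars false

section SortedRow
variable {α : Type*} [LinearOrder α] [Fintype α]

def msetOf (f : α → ℕ) : Multiset α := ∑ a : α, Multiset.replicate (f a) a

lemma count_msetOf (f : α → ℕ) (a : α) : (msetOf f).count a = f a := by
  classical
  simp [msetOf, Multiset.count_sum', Multiset.count_replicate]

lemma card_msetOf (f : α → ℕ) : Multiset.card (msetOf f) = ∑ a : α, f a := by
  simp [msetOf]

def sortedListOf (f : α → ℕ) : List α := (msetOf f).sort (· ≤ ·)

lemma length_sortedListOf (f : α → ℕ) : (sortedListOf f).length = ∑ a : α, f a := by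
  rw [sortedListOf, Multiset.length_sort, card_msetOf]

lemma sorted_sortedListOf (f : α → ℕ) : (sortedListOf f).Pairwise (· ≤ ·) :=
  Multiset.pairwise_sort _ _

lemma count_sortedListOf (f : α → ℕ) (a : α) : (sortedListOf f).count a = f a := by
  classical
  rw [← count_msetOf f a, ← Multiset.coe_count, sortedListOf, Multiset.sort_eq]

def rowOf (f : α → ℕ) {C : ℕ} (h : ∑ a : α, f a = C) : Fin C → α :=
  fun c => (sortedListOf f).get ⟨c, by rw [length_sortedListOf, h]; exact c.2⟩

lemma monotone_rowOf (f : α → ℕ) {C : ℕ} (h : ∑ a : α, f a = C) : Monotone (rowOf f h) := by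
  intro c c' hcc
  exact (sorted_sortedListOf f).sortedLE.monotone_get (by simpa using hcc)

lemma card_get_eq {l : List α} (a : α) :
    (univ.filter fun c : Fin l.length => l.get c = a).card = l.count a := by
  classical
  have h1 : (univ.filter fun c : Fin l.length => l.get c = a).card
      = (List.finRange l.length).countP (fun c => decide (l.get c = a)) := by
    rw [List.countP_eq_length_filter]; rfl
  rw [h1, show (fun c => decide (l.get c = a)) = ((fun x => decide (x = a)) ∘ l.get) from rfl,
    ← List.countP_map, List.map_get_finRange, List.count]
  congr 1

lemma card_rowOf_eq (f : α → ℕ) {C : ℕ} (h : ∑ a : α, f a = C) (a : α) :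
    (univ.filter fun c : Fin C => rowOf f h c = a).card = f a := by
  classical
  rw [← count_sortedListOf f a, ← card_get_eq]
  apply Finset.card_equiv (Fin.castOrderIso (by rw [length_sortedListOf, h]) :
    Fin C ≃o Fin (sortedListOf f).length).toEquiv
  intro c
  simp only [Finset.mem_filter, Finset.mem_univ, true_and]
  rfl

end SortedRow

section Interleave
variable {α : Type*} [LinearOrder α] [Fintype α]

/-- Forward: strict column domination gives the counting inequality. -/
lemma count_le_of_lt {C : ℕ} {a b : Fin C → α} (hab : ∀ c, a c < b c) (x : α) :
    (univ.filter fun c => b c ≤ x).card ≤ (univ.filter fun c => a c < x).card := by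
  classical
  apply Finset.card_le_card
  intro c hc
  simp only [Finset.mem_filter, Finset.mem_univ, true_and] at *
  exact lt_of_lt_of_le (hab c) hc

/-- Backward: counting inequalities for monotone rows give strict domination. -/
lemma lt_of_count_le {C : ℕ} {a b : Fin C → α} (ha : Monotone a) (hb : Monotone b)
    (h : ∀ x, (univ.filter fun c => b c ≤ x).card ≤ (univ.filter fun c => a c < x).card) :
    ∀ c, a c < b c := by
  classical
  intro c
  by_contra hcon
  push_neg at hcon
  have h1 : (univ.filter fun c' : Fin C => c' ≤ c) ⊆ (univ.filter fun c' => b c' ≤ b c) := by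
    intro c' hc'
    simp only [Finset.mem_filter, Finset.mem_univ, true_and] at *
    exact hb hc'
  have h2 : (univ.filter fun c' : Fin C => a c' < b c) ⊆ (univ.filter fun c' => c' < c) := by
    intro c' hc'
    simp only [Finset.mem_filter, Finset.mem_univ, true_and] at *
    by_contra hge
    push_neg at hge
    exact absurd (lt_of_le_of_lt (hcon.trans (ha hge)) hc') (lt_irrefl _)
  have e1 : (univ.filter fun c' : Fin C => c' ≤ c).card = (c : ℕ) + 1 := by
    rw [show (univ.filter fun c' : Fin C => c' ≤ c) = Finset.Iic c by ext x; simp]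
    exact Fin.card_Iic c
  have e2 : (univ.filter fun c' : Fin C => c' < c).card = (c : ℕ) := by
    rw [show (univ.filter fun c' : Fin C => c' < c) = Finset.Iio c by ext x; simp]
    exact Fin.card_Iio c
  have := (Finset.card_le_card h1).trans ((h (b c)).trans (Finset.card_le_card h2))
  rw [e1, e2] at this
  omega

end Interleave

section Counting
variable {α : Type*} [DecidableEq α] [Fintype α]

/-- Decompose a filtered count over a tableau row into label fibers. -/
lemma card_filter_comp {C : ℕ} (T : Fin C → α) (p : α → Prop) [DecidablePred p] :
    (univ.filter fun c => p (T c)).card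
      = ∑ a : α, if p a then (univ.filter fun c => T c = a).card else 0 := by
  rw [← Finset.sum_filter]
  rw [Finset.card_eq_sum_card_fiberwise
    (f := T) (t := univ.filter p) (fun c hc => by simpa using (Finset.mem_filter.mp hc).2)]
  apply Finset.sum_congr rfl
  intro a ha
  congr 1
  ext c
  simp only [Finset.mem_filter, Finset.mem_univ, true_and, and_iff_right_iff_imp]
  intro h
  rw [h]
  exact (Finset.mem_filter.mp ha).2

/-- Count over a row of a rectangular tableau, seen as a filter over all boxes. -/
lemma card_row {R C : ℕ} (p : Fin R) (Q : Fin C → Prop) [DecidablePred Q] :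
    (univ.filter fun y : Fin R × Fin C => y.1 = p ∧ Q y.2).card
      = (univ.filter fun c => Q c).card := by
  apply Finset.card_bij (fun y _ => y.2)
  · intro y hy
    simp only [Finset.mem_filter, Finset.mem_univ, true_and] at *
    exact hy.2
  · intro y hy y' hy' h
    simp only [Finset.mem_filter, Finset.mem_univ, true_and] at hy hy'
    exact Prod.ext (hy.1.trans hy'.1.symm) h
  · intro c hc
    simp only [Finset.mem_filter, Finset.mem_univ, true_and] at hc
    exact ⟨(p, c), Finset.mem_filter.mpr ⟨Finset.mem_univ _, rfl, hc⟩, rfl⟩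

end Counting

section Bridge
open Finset

lemma sum_lex_eq {n r : ℕ} (g : Lex (Fin n × Fin r) → ℕ) :
    ∑ a : Lex (Fin n × Fin r), g a = ∑ i, ∑ k, g (toLex (i, k)) := by
  have h1 : ∑ a : Lex (Fin n × Fin r), g a = ∑ x : Fin n × Fin r, g (toLex x) :=
    (Fintype.sum_equiv (toLex : (Fin n × Fin r) ≃ Lex _) _ g (fun x => rfl)).symm
  rw [h1]
  exact Fintype.sum_prod_type _

lemma sum_ite_eq_card {n R C : ℕ} (T : Fin C → Fin n × Fin R)
    (p : Lex (Fin n × Fin R) → Prop) [DecidablePred p] :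
    ∑ s, ∑ l, (if p (toLex (s, l)) then (univ.filter fun c => T c = (s, l)).card else 0)
      = (univ.filter fun c => p (toLex (T c))).card := by
  classical
  rw [card_filter_comp (fun c => toLex (T c)) p, sum_lex_eq]
  refine Finset.sum_congr rfl fun s _ => Finset.sum_congr rfl fun l _ => ?_
  rfl

lemma sum_fibers {n R C : ℕ} (T : Fin C → Fin n × Fin R) :
    ∑ i, ∑ l, (univ.filter fun c => T c = (i, l)).card = C := by
  classical
  have h := sum_ite_eq_card T (fun _ => True)
  simpa using h

end Bridge

section LinkCount

lemma link_count {n r1 r2 c1 c2 : ℕ} (P : LinkedPair n r1 r2 c1 c2) (i : Fin n)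
    (p : Fin r1) (q : Fin r2) :
    (univ.filter fun c => P.Tm p c = (i, q)).card
      = (univ.filter fun c => P.Tp q c = (i, p)).card := by
  classical
  rw [← card_row (R := r1) p (fun c => P.Tm p c = (i, q)),
      ← card_row (R := r2) q (fun c => P.Tp q c = (i, p))]
  apply Finset.card_equiv P.link
  rintro ⟨p', c⟩
  simp only [Finset.mem_filter, Finset.mem_univ, true_and]
  have h1 := P.link_row p' c
  have h2 := P.link_label p' c
  constructor
  · rintro ⟨rfl, h⟩
    rw [h] at h1 h2
    have h1' : (P.link (p', c)).1 = q := h1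
    refine ⟨h1', ?_⟩
    rw [← h1']
    exact h2
  · rintro ⟨hq, hl⟩
    rw [← hq] at hl
    rw [h2] at hl
    have hi : (P.Tm p' c).1 = i := congrArg Prod.fst hl
    have hp : p' = p := congrArg Prod.snd hl
    subst hp
    exact ⟨rfl, Prod.ext hi (h1.symm.trans hq)⟩

end LinkCount


lemma strictMono_of_consecutive {R : ℕ} {β : Type*} [Preorder β] {f : Fin R → β}
    (h : ∀ j j' : Fin R, (j : ℕ) + 1 = (j' : ℕ) → f j < f j') : StrictMono f := by
  intro a b hab
  have key : ∀ m : ℕ, ∀ a b : Fin R, (b : ℕ) = (a : ℕ) + m + 1 → f a < f b := by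
    intro m
    induction m with
    | zero => exact fun a b hb => h a b (by omega)
    | succ m ih =>
      intro a b hb
      have hb' : (b : ℕ) - 1 < R := lt_of_le_of_lt (Nat.sub_le _ _) b.2
      exact (ih a ⟨(b : ℕ) - 1, hb'⟩ (by simp; omega)).trans
        (h ⟨(b : ℕ) - 1, hb'⟩ b (by simp; omega))
  exact key ((b : ℕ) - (a : ℕ) - 1) a b (by have := Fin.lt_def.mp hab; omega)

set_option maxHeartbeats 2000000 in
/-- A lattice point `v` in the nonnegative orthant is the exponent vector of a
semi-standard linked tableaux pair if and only if: (1) all row sums are equal; (2) all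
column sums are equal; and (3) the partial-sum (semi-standardness) inequalities hold for
each of the two associated tableaux with weakly increasing rows. -/
theorem stmt3 (n r1 r2 : ℕ) (v : Fin n → Fin r2 → Fin r1 → ℕ) :
    (∃ (c1 c2 : ℕ) (P : LinkedPair n r1 r2 c1 c2), P.SemiStandard ∧ v = P.expVec) ↔
      ((∀ j j' : Fin r2, ∑ i, ∑ k, v i j k = ∑ i, ∑ k, v i j' k) ∧
       (∀ k k' : Fin r1, ∑ i, ∑ j, v i j k = ∑ i, ∑ j, v i j k') ∧
       (∀ j j' : Fin r2, (j : ℕ) + 1 = (j' : ℕ) → ∀ (i : Fin n) (k : Fin r1),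
          ∑ s, ∑ l, (if toLex ((s, l) : Fin n × Fin r1) < toLex (i, k) then v s j l else 0) ≥
            ∑ s, ∑ l, (if toLex ((s, l) : Fin n × Fin r1) ≤ toLex (i, k) then v s j' l else 0)) ∧
       (∀ k k' : Fin r1, (k : ℕ) + 1 = (k' : ℕ) → ∀ (i : Fin n) (j : Fin r2),
          ∑ s, ∑ m, (if toLex ((s, m) : Fin n × Fin r2) < toLex (i, j) then v s m k else 0) ≥
            ∑ s, ∑ m, (if toLex ((s, m) : Fin n × Fin r2) ≤ toLex (i, j) then v s m k' else 0))) := by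
  constructor
  · rintro ⟨c1, c2, P, ⟨⟨hmMono, hmCol⟩, ⟨hpMono, hpCol⟩⟩, rfl⟩
    classical
    have hv : ∀ (s : Fin n) (m : Fin r2) (k : Fin r1),
        P.expVec s m k = (Finset.univ.filter fun c => P.Tm k c = (s, m)).card :=
      fun s m k => ((link_count P s k m).symm : _)
    refine ⟨?_, ?_, ?_, ?_⟩
    · intro j j'
      show (∑ i, ∑ k, (Finset.univ.filter fun c => P.Tp j c = (i, k)).card)
          = ∑ i, ∑ k, (Finset.univ.filter fun c => P.Tp j' c = (i, k)).card
      rw [sum_fibers (P.Tp j), sum_fibers (P.Tp j')]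
    · intro k k'
      have key : ∀ k : Fin r1, ∑ i, ∑ j, P.expVec i j k = c1 := by
        intro k
        calc ∑ i, ∑ j, P.expVec i j k
            = ∑ i, ∑ j, (Finset.univ.filter fun c => P.Tm k c = (i, j)).card :=
              Finset.sum_congr rfl fun i _ => Finset.sum_congr rfl fun j _ => hv i j k
          _ = c1 := sum_fibers (P.Tm k)
      rw [key k, key k']
    · intro j j' hjj i k
      have hlt : j < j' := by rw [Fin.lt_def]; omega
      have hcol : ∀ c, toLex (P.Tp j c) < toLex (P.Tp j' c) := fun c => hpCol c hlt
      show ∑ s, ∑ l, (if toLex ((s, l) : Fin n × Fin r1) < toLex (i, k)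
            then (Finset.univ.filter fun c => P.Tp j c = (s, l)).card else 0)
          ≥ ∑ s, ∑ l, (if toLex ((s, l) : Fin n × Fin r1) ≤ toLex (i, k)
            then (Finset.univ.filter fun c => P.Tp j' c = (s, l)).card else 0)
      rw [sum_ite_eq_card (P.Tp j) (fun a => a < toLex (i, k)),
        sum_ite_eq_card (P.Tp j') (fun a => a ≤ toLex (i, k))]
      exact count_le_of_lt hcol (toLex (i, k))
    · intro k k' hkk i j
      have hlt : k < k' := by rw [Fin.lt_def]; omega
      have hcol : ∀ c, toLex (P.Tm k c) < toLex (P.Tm k' c) := fun c => hmCol c hlt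
      have e : ∀ (kk : Fin r1) (q : Lex (Fin n × Fin r2) → Prop) [DecidablePred q],
          ∑ s, ∑ m, (if q (toLex (s, m)) then P.expVec s m kk else 0)
            = (Finset.univ.filter fun c => q (toLex (P.Tm kk c))).card := by
        intro kk q _
        rw [← sum_ite_eq_card (P.Tm kk) q]
        exact Finset.sum_congr rfl fun s _ => Finset.sum_congr rfl fun m _ => by
          rw [hv s m kk]
      rw [e k (fun a => a < toLex (i, j)), e k' (fun a => a ≤ toLex (i, j))]
      exact count_le_of_lt hcol (toLex (i, j))
  · rintro ⟨h1, h2, h3, h4⟩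
    classical
    obtain ⟨c2, hc2⟩ : ∃ c2, ∀ j : Fin r2, ∑ i, ∑ k, v i j k = c2 :=
      ⟨Finset.univ.sup (fun j : Fin r2 => ∑ i, ∑ k, v i j k), fun j =>
        le_antisymm (Finset.le_sup (f := fun j : Fin r2 => ∑ i, ∑ k, v i j k)
            (Finset.mem_univ j))
          (Finset.sup_le fun j' _ => (h1 j' j).le)⟩
    obtain ⟨c1, hc1⟩ : ∃ c1, ∀ k : Fin r1, ∑ i, ∑ j, v i j k = c1 :=
      ⟨Finset.univ.sup (fun k : Fin r1 => ∑ i, ∑ j, v i j k), fun k =>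
        le_antisymm (Finset.le_sup (f := fun k : Fin r1 => ∑ i, ∑ j, v i j k)
            (Finset.mem_univ k))
          (Finset.sup_le fun k' _ => (h2 k' k).le)⟩
    have hsp : ∀ j : Fin r2, ∑ a : Lex (Fin n × Fin r1), v (ofLex a).1 j (ofLex a).2 = c2 := by
      intro j
      rw [sum_lex_eq (fun a => v (ofLex a).1 j (ofLex a).2)]
      exact hc2 j
    have hsm : ∀ k : Fin r1, ∑ a : Lex (Fin n × Fin r2), v (ofLex a).1 (ofLex a).2 k = c1 := by
      intro k
      rw [sum_lex_eq (fun a => v (ofLex a).1 (ofLex a).2 k)]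
      exact hc1 k
    let Tp : Fin r2 → Fin c2 → Fin n × Fin r1 :=
      fun j c => ofLex (rowOf (fun a => v (ofLex a).1 j (ofLex a).2) (hsp j) c)
    let Tm : Fin r1 → Fin c1 → Fin n × Fin r2 :=
      fun k c => ofLex (rowOf (fun a => v (ofLex a).1 (ofLex a).2 k) (hsm k) c)
    have hTp : ∀ (i : Fin n) (j : Fin r2) (k : Fin r1),
        (Finset.univ.filter fun c => Tp j c = (i, k)).card = v i j k := by
      intro i j k
      refine Eq.trans ?_ (card_rowOf_eq (fun a => v (ofLex a).1 j (ofLex a).2) (hsp j)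
        (toLex (i, k)))
      congr 1
    have hTm : ∀ (i : Fin n) (k : Fin r1) (j : Fin r2),
        (Finset.univ.filter fun c => Tm k c = (i, j)).card = v i j k := by
      intro i k j
      refine Eq.trans ?_ (card_rowOf_eq (fun a => v (ofLex a).1 (ofLex a).2 k) (hsm k)
        (toLex (i, j)))
      congr 1
    -- row monotonicity
    have hpMono : ∀ j, Monotone (fun c => toLex (Tp j c)) := fun j =>
      (monotone_rowOf (fun a : Lex (Fin n × Fin r1) => v (ofLex a).1 j (ofLex a).2)
        (hsp j) : _)
    have hmMono : ∀ k, Monotone (fun c => toLex (Tm k c)) := fun k =>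
      (monotone_rowOf (fun a : Lex (Fin n × Fin r2) => v (ofLex a).1 (ofLex a).2 k)
        (hsm k) : _)
    -- column strictness
    have hpStep : ∀ (j j' : Fin r2), (j : ℕ) + 1 = (j' : ℕ) → ∀ c,
        toLex (Tp j c) < toLex (Tp j' c) := by
      intro j j' hjj
      refine lt_of_count_le (hpMono j) (hpMono j') ?_
      intro x
      have h := h3 j j' hjj (ofLex x).1 (ofLex x).2
      have hx : toLex (((ofLex x).1, (ofLex x).2) : Fin n × Fin r1) = x := rfl
      rw [hx] at h
      have e1 : ∑ s, ∑ l, (if toLex ((s, l) : Fin n × Fin r1) < x then v s j l else 0)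
          = (Finset.univ.filter fun c => toLex (Tp j c) < x).card := by
        rw [← sum_ite_eq_card (Tp j) (fun a => a < x)]
        exact Finset.sum_congr rfl fun s _ => Finset.sum_congr rfl fun l _ => by
          rw [hTp s j l]
      have e2 : ∑ s, ∑ l, (if toLex ((s, l) : Fin n × Fin r1) ≤ x then v s j' l else 0)
          = (Finset.univ.filter fun c => toLex (Tp j' c) ≤ x).card := by
        rw [← sum_ite_eq_card (Tp j') (fun a => a ≤ x)]
        exact Finset.sum_congr rfl fun s _ => Finset.sum_congr rfl fun l _ => by
          rw [hTp s j' l]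
      rw [e1, e2] at h
      exact h
    have hmStep : ∀ (k k' : Fin r1), (k : ℕ) + 1 = (k' : ℕ) → ∀ c,
        toLex (Tm k c) < toLex (Tm k' c) := by
      intro k k' hkk
      refine lt_of_count_le (hmMono k) (hmMono k') ?_
      intro x
      have h := h4 k k' hkk (ofLex x).1 (ofLex x).2
      have hx : toLex (((ofLex x).1, (ofLex x).2) : Fin n × Fin r2) = x := rfl
      rw [hx] at h
      have e1 : ∑ s, ∑ m, (if toLex ((s, m) : Fin n × Fin r2) < x then v s m k else 0)
          = (Finset.univ.filter fun c => toLex (Tm k c) < x).card := by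
        rw [← sum_ite_eq_card (Tm k) (fun a => a < x)]
        exact Finset.sum_congr rfl fun s _ => Finset.sum_congr rfl fun m _ => by
          rw [hTm s k m]
      have e2 : ∑ s, ∑ m, (if toLex ((s, m) : Fin n × Fin r2) ≤ x then v s m k' else 0)
          = (Finset.univ.filter fun c => toLex (Tm k' c) ≤ x).card := by
        rw [← sum_ite_eq_card (Tm k') (fun a => a ≤ x)]
        exact Finset.sum_congr rfl fun s _ => Finset.sum_congr rfl fun m _ => by
          rw [hTm s k' m]
      rw [e1, e2] at h
      exact h
    -- the link
    let φm : Fin r1 × Fin c1 → Fin n × Fin r1 × Fin r2 :=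
      fun y => ((Tm y.1 y.2).1, y.1, (Tm y.1 y.2).2)
    let φp : Fin r2 × Fin c2 → Fin n × Fin r1 × Fin r2 :=
      fun x => ((Tp x.1 x.2).1, (Tp x.1 x.2).2, x.1)
    have hcard : ∀ t, Fintype.card {y // φm y = t} = Fintype.card {x // φp x = t} := by
      rintro ⟨i, p, q⟩
      rw [Fintype.card_subtype, Fintype.card_subtype]
      have em : (Finset.univ.filter fun y => φm y = (i, p, q))
          = (Finset.univ.filter fun y : Fin r1 × Fin c1 => y.1 = p ∧ Tm p y.2 = (i, q)) := by
        ext ⟨p', c⟩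
        simp only [Finset.mem_filter, Finset.mem_univ, true_and, φm, Prod.mk.injEq]
        constructor
        · rintro ⟨hi, rfl, hq⟩
          exact ⟨rfl, Prod.ext hi hq⟩
        · rintro ⟨rfl, hl⟩
          exact ⟨congrArg Prod.fst hl, rfl, congrArg Prod.snd hl⟩
      have ep : (Finset.univ.filter fun x => φp x = (i, p, q))
          = (Finset.univ.filter fun x : Fin r2 × Fin c2 => x.1 = q ∧ Tp q x.2 = (i, p)) := by
        ext ⟨q', c⟩
        simp only [Finset.mem_filter, Finset.mem_univ, true_and, φp, Prod.mk.injEq]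
        constructor
        · rintro ⟨hi, hp, rfl⟩
          exact ⟨rfl, Prod.ext hi hp⟩
        · rintro ⟨rfl, hl⟩
          exact ⟨congrArg Prod.fst hl, congrArg Prod.snd hl, rfl⟩
      rw [em, ep, card_row p (fun c => Tm p c = (i, q)), card_row q (fun c => Tp q c = (i, p)),
        hTm i p q, hTp i q p]
    refine ⟨c1, c2,
      { Tm := Tm, Tp := Tp,
        link := Equiv.ofFiberEquiv (fun t => Fintype.equivOfCardEq (hcard t)),
        link_row := ?_, link_label := ?_ }, ⟨⟨hmMono, ?_⟩, ⟨hpMono, ?_⟩⟩, ?_⟩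
    · intro p c
      have hmap := Equiv.ofFiberEquiv_map (fun t => Fintype.equivOfCardEq (hcard t)) (p, c)
      exact congrArg (fun t : Fin n × Fin r1 × Fin r2 => t.2.2) hmap
    · intro p c
      have hmap := Equiv.ofFiberEquiv_map (fun t => Fintype.equivOfCardEq (hcard t)) (p, c)
      exact Prod.ext (congrArg (fun t : Fin n × Fin r1 × Fin r2 => t.1) hmap)
        (congrArg (fun t : Fin n × Fin r1 × Fin r2 => t.2.1) hmap)
    · intro c
      exact strictMono_of_consecutive (f := fun k => toLex (Tm k c))
        (fun k k' hkk => hmStep k k' hkk c)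
    · intro c
      exact strictMono_of_consecutive (f := fun j => toLex (Tp j c))
        (fun j j' hjj => hpStep j j' hjj c)
    · funext i j k
      exact (hTp i j k).symm
end

section
/- The cone C^n_{r1 r2} generated by exponent vectors of semi-standard linked tableaux pairs equals the intersection C^{n r1}_{1 r2} ∩ C^{n r2}_{1 r1} of the two Gelfand–Cetlin-type cones associated to the Grassmannians Gr(r2, n r1) and Gr(r1, n r2), under the standard lattice identifications. -/
open scoped BigOperators

/-- Exponent vectors of semi-standard Young tableaux for `Gr(r1, n·r2)`: tableaux with
`r1` rows and entries the lexicographically ordered labels `ij`, `i ∈ Fin n`,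
`j ∈ Fin r2`; under the stacking identification these live in `RV n r1 r2`, with
`v i j k` the number of labels `ij` in row `k`. -/
def grassVectors1 (n r1 r2 : ℕ) : Set (RV n r1 r2) :=
  {v | ∃ (m : ℕ) (T : Fin r1 → Fin m → Lex (Fin n × Fin r2)), IsSSYT T ∧
        ∀ i j k, v i j k = ((Finset.univ.filter fun c => T k c = toLex (i, j)).card : ℝ)}

/-- Exponent vectors of semi-standard Young tableaux for `Gr(r2, n·r1)`: tableaux with
`r2` rows and entries the labels `ik`, `i ∈ Fin n`, `k ∈ Fin r1`; `v i j k` is the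
number of labels `ik` in row `j`. -/
def grassVectors2 (n r1 r2 : ℕ) : Set (RV n r1 r2) :=
  {v | ∃ (m : ℕ) (T : Fin r2 → Fin m → Lex (Fin n × Fin r1)), IsSSYT T ∧
        ∀ i j k, v i j k = ((Finset.univ.filter fun c => T j c = toLex (i, k)).card : ℝ)}

/-- The Gelfand--Cetlin-type cone `C^{n r2}_{1 r1}` of `Gr(r1, n r2)`. -/
def grassCone1 (n r1 r2 : ℕ) : PointedCone ℝ (RV n r1 r2) :=
  Submodule.span {c : ℝ // 0 ≤ c} (grassVectors1 n r1 r2)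

/-- The Gelfand--Cetlin-type cone `C^{n r1}_{1 r2}` of `Gr(r2, n r1)`. -/
def grassCone2 (n r1 r2 : ℕ) : PointedCone ℝ (RV n r1 r2) :=
  Submodule.span {c : ℝ // 0 ≤ c} (grassVectors2 n r1 r2)

open Finset

lemma card_filter_comp_perm {m : ℕ} {α : Type*} (f : Fin m → α) (σ : Equiv.Perm (Fin m))
    (p : α → Prop) [DecidablePred p] :
    (univ.filter fun c => p (f (σ c))).card = (univ.filter fun c => p (f c)).card := by
  apply Finset.card_bij (fun c _ => σ c)
  · intro a ha; simp only [mem_filter, mem_univ, true_and] at ha ⊢; exact ha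
  · intro a _ b _ h; exact σ.injective h
  · intro b hb
    refine ⟨σ.symm b, ?_, by simp⟩
    simp only [mem_filter, mem_univ, true_and] at hb ⊢
    simpa using hb

lemma card_filter_append {m m' : ℕ} {α : Type*} (f : Fin m → α) (f' : Fin m' → α)
    (p : α → Prop) [DecidablePred p] :
    (univ.filter fun c => p (Fin.append f f' c)).card
      = (univ.filter fun c => p (f c)).card + (univ.filter fun c => p (f' c)).card := by
  classical
  simp only [Finset.card_filter]
  rw [Fin.sum_univ_add]
  simp [Fin.append_left, Fin.append_right]

lemma ssyt_merge {R m m' : ℕ} {α : Type*} [LinearOrder α] {T : Fin R → Fin m → α}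
    {T' : Fin R → Fin m' → α} (hT : IsSSYT T) (hT' : IsSSYT T') :
    ∃ M : Fin R → Fin (m + m') → α, IsSSYT M ∧
      ∀ (p : Fin R) (a : α), (univ.filter fun c => M p c = a).card
        = (univ.filter fun c => T p c = a).card + (univ.filter fun c => T' p c = a).card := by
  classical
  refine ⟨fun p => (Fin.append (T p) (T' p)) ∘ (Tuple.sort (Fin.append (T p) (T' p))), ⟨?_, ?_⟩, ?_⟩
  · exact fun p => Tuple.monotone_sort _
  · -- strict columns
    intro c j1 j2 hj
    set M : Fin R → Fin (m + m') → α :=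
      fun p => (Fin.append (T p) (T' p)) ∘ (Tuple.sort (Fin.append (T p) (T' p))) with hM
    have hcnt : ∀ (p : Fin R) (q : α → Prop) (_ : DecidablePred q),
        (univ.filter fun c => q (M p c)).card
          = (univ.filter fun c => q (T p c)).card + (univ.filter fun c => q (T' p c)).card := by
      intro p q hq
      rw [show (univ.filter fun c => q (M p c)).card
            = (univ.filter fun c => q (Fin.append (T p) (T' p) c)).card from
          card_filter_comp_perm (Fin.append (T p) (T' p)) _ q]
      exact card_filter_append (T p) (T' p) q
    have hmono : ∀ p, Monotone (M p) := fun p => Tuple.monotone_sort _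
    show M j1 c < M j2 c
    by_contra hcon
    push_neg at hcon
    set a := M j2 c with ha
    have key1 : (c : ℕ) + 1 ≤ (univ.filter fun c' => M j2 c' ≤ a).card := by
      have hsub : Finset.Iic c ⊆ univ.filter fun c' => M j2 c' ≤ a := by
        intro c' hc'
        simp only [Finset.mem_Iic] at hc'
        simp only [mem_filter, mem_univ, true_and]
        exact hmono j2 hc'
      simpa [Fin.card_Iic] using Finset.card_le_card hsub
    have key2 : (univ.filter fun c' => M j1 c' < a).card ≤ (c : ℕ) := by
      have hsub : (univ.filter fun c' => M j1 c' < a) ⊆ Finset.Iio c := by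
        intro c' hc'
        simp only [mem_filter, mem_univ, true_and] at hc'
        simp only [Finset.mem_Iio]
        by_contra h
        push_neg at h
        exact absurd (lt_of_le_of_lt (hcon.trans (hmono j1 h)) hc') (lt_irrefl _)
      simpa [Fin.card_Iio] using Finset.card_le_card hsub
    have step1 : (univ.filter fun c' => T j2 c' ≤ a).card
        ≤ (univ.filter fun c' => T j1 c' < a).card := by
      apply Finset.card_le_card
      intro c' hc'
      simp only [mem_filter, mem_univ, true_and] at hc' ⊢
      exact lt_of_lt_of_le (hT.2 c' hj) hc'
    have step2 : (univ.filter fun c' => T' j2 c' ≤ a).card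
        ≤ (univ.filter fun c' => T' j1 c' < a).card := by
      apply Finset.card_le_card
      intro c' hc'
      simp only [mem_filter, mem_univ, true_and] at hc' ⊢
      exact lt_of_lt_of_le (hT'.2 c' hj) hc'
    have e1 := hcnt j2 (· ≤ a) inferInstance
    have e2 := hcnt j1 (· < a) inferInstance
    omega
  · intro p a
    rw [show (univ.filter fun c =>
          ((Fin.append (T p) (T' p)) ∘ (Tuple.sort (Fin.append (T p) (T' p)))) c = a).card
        = (univ.filter fun c => Fin.append (T p) (T' p) c = a).card from
      card_filter_comp_perm (Fin.append (T p) (T' p)) _ (· = a)]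
    exact card_filter_append (T p) (T' p) (· = a)

lemma isSSYT_empty {R : ℕ} {α : Type*} [Preorder α] :
    IsSSYT (fun (_ : Fin R) (c : Fin 0) => (c.elim0 : α)) :=
  ⟨fun _ a => a.elim0, fun c => c.elim0⟩

lemma grassVectors1_zero (n r1 r2 : ℕ) : (0 : RV n r1 r2) ∈ grassVectors1 n r1 r2 := by
  refine ⟨0, fun _ c => c.elim0, isSSYT_empty, fun i j k => by simp⟩

lemma grassVectors2_zero (n r1 r2 : ℕ) : (0 : RV n r1 r2) ∈ grassVectors2 n r1 r2 := by
  refine ⟨0, fun _ c => c.elim0, isSSYT_empty, fun i j k => by simp⟩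

lemma grassVectors1_add {n r1 r2 : ℕ} {v w : RV n r1 r2}
    (hv : v ∈ grassVectors1 n r1 r2) (hw : w ∈ grassVectors1 n r1 r2) :
    v + w ∈ grassVectors1 n r1 r2 := by
  obtain ⟨m, T, hT, hvv⟩ := hv
  obtain ⟨m', T', hT', hww⟩ := hw
  obtain ⟨M, hM, hc⟩ := ssyt_merge hT hT'
  refine ⟨m + m', M, hM, fun i j k => ?_⟩
  have := hc k (toLex (i, j))
  simp only [Pi.add_apply, hvv, hww]
  norm_cast
  convert this.symm using 3 <;> congr!

lemma grassVectors2_add {n r1 r2 : ℕ} {v w : RV n r1 r2}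
    (hv : v ∈ grassVectors2 n r1 r2) (hw : w ∈ grassVectors2 n r1 r2) :
    v + w ∈ grassVectors2 n r1 r2 := by
  obtain ⟨m, T, hT, hvv⟩ := hv
  obtain ⟨m', T', hT', hww⟩ := hw
  obtain ⟨M, hM, hc⟩ := ssyt_merge hT hT'
  refine ⟨m + m', M, hM, fun i j k => ?_⟩
  have := hc j (toLex (i, k))
  simp only [Pi.add_apply, hvv, hww]
  norm_cast
  convert this.symm using 3 <;> congr!

lemma mem_of_sum_nsmul {E : Type*} [AddCommMonoid E] {S : Set E} (h0 : (0 : E) ∈ S)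
    (hadd : ∀ a ∈ S, ∀ b ∈ S, a + b ∈ S) {β : Type*} [Fintype β] (w : β → ℕ) (f : β → E)
    (hf : ∀ b, f b ∈ S) : (∑ b, w b • f b) ∈ S := by
  classical
  have key : ∀ (l : ℕ) (x : E), x ∈ S → l • x ∈ S := by
    intro l
    induction l with
    | zero => intro x _; simpa using h0
    | succ l ih => intro x hx; rw [succ_nsmul]; exact hadd _ (ih x hx) _ hx
  refine Finset.sum_induction _ (· ∈ S) (fun a b ha hb => hadd a ha b hb) h0 ?_
  intro b _
  exact key (w b) (f b) (hf b)

lemma ss_sub_gv2 (n r1 r2 : ℕ) : ssVectors n r1 r2 ⊆ grassVectors2 n r1 r2 := by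
  rintro v ⟨c1, c2, P, ⟨hm, hp⟩, hv⟩
  refine ⟨c2, fun q c => toLex (P.Tp q c), hp, fun i j k => ?_⟩
  rw [hv i j k]
  norm_cast

lemma ss_sub_gv1 (n r1 r2 : ℕ) : ssVectors n r1 r2 ⊆ grassVectors1 n r1 r2 := by
  rintro v ⟨c1, c2, P, ⟨hm, hp⟩, hv⟩
  refine ⟨c1, fun p c => toLex (P.Tm p c), hm, fun i j k => ?_⟩
  rw [hv i j k]
  norm_cast
  show (LinkedPair.expVec P i j k) = _
  unfold LinkedPair.expVec
  apply Finset.card_bij (fun c _ => (P.link.symm (j, c)).2)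
  · intro c hc
    simp only [mem_filter, mem_univ, true_and] at hc ⊢
    have h1 : P.link (P.link.symm (j, c)) = (j, c) := P.link.apply_symm_apply _
    have hrow := P.link_row (P.link.symm (j, c)).1 (P.link.symm (j, c)).2
    have hlab := P.link_label (P.link.symm (j, c)).1 (P.link.symm (j, c)).2
    rw [h1] at hrow hlab
    -- hrow : j = (P.Tm _ _).2 ; hlab : P.Tp j c = ((P.Tm _ _).1, _)
    rw [hc] at hlab
    have h2 : (P.Tm (P.link.symm (j, c)).1 (P.link.symm (j, c)).2).1 = i :=
      (congrArg Prod.fst hlab).symm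
    have h3 : (P.link.symm (j, c)).1 = k := (congrArg Prod.snd hlab).symm
    rw [h3] at h2 hrow
    have : P.Tm k (P.link.symm (j, c)).2 = (i, j) := Prod.ext h2 hrow.symm
    rw [this]
  · intro a ha b hb hab
    simp only [mem_filter, mem_univ, true_and] at ha hb
    have key : ∀ c, P.Tp j c = (i, k) → (P.link.symm (j, c)).1 = k := by
      intro c hc
      have h1 : P.link (P.link.symm (j, c)) = (j, c) := P.link.apply_symm_apply _
      have hlab := P.link_label (P.link.symm (j, c)).1 (P.link.symm (j, c)).2
      rw [h1, hc] at hlab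
      exact (congrArg Prod.snd hlab).symm
    have : P.link.symm (j, a) = P.link.symm (j, b) :=
      Prod.ext ((key a ha).trans (key b hb).symm) hab
    have := congrArg P.link this
    rw [P.link.apply_symm_apply, P.link.apply_symm_apply] at this
    exact congrArg Prod.snd this
  · intro b hb
    simp only [mem_filter, mem_univ, true_and] at hb
    have hb' : P.Tm k b = (i, j) := hb
    refine ⟨(P.link (k, b)).2, ?_, ?_⟩
    · simp only [mem_filter, mem_univ, true_and]
      have hrow := P.link_row k b
      have hlab := P.link_label k b
      rw [hb'] at hrow hlab
      -- hrow : (P.link (k,b)).1 = j ; hlab : P.Tp (P.link (k,b)).1 (P.link (k,b)).2 = (i, k)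
      rw [hrow] at hlab
      exact hlab
    · have hrow := P.link_row k b
      rw [hb'] at hrow
      have : ((j : Fin r2), (P.link (k, b)).2) = P.link (k, b) := Prod.ext hrow.symm rfl
      rw [this, P.link.symm_apply_apply]

-- box classification maps
private def fBox {n r1 r2 m1 : ℕ} (T1 : Fin r1 → Fin m1 → Lex (Fin n × Fin r2)) :
    Fin r1 × Fin m1 → Fin n × Fin r1 × Fin r2 :=
  fun a => ((ofLex (T1 a.1 a.2)).1, a.1, (ofLex (T1 a.1 a.2)).2)

private def gBox {n r1 r2 m2 : ℕ} (T2 : Fin r2 → Fin m2 → Lex (Fin n × Fin r1)) :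
    Fin r2 × Fin m2 → Fin n × Fin r1 × Fin r2 :=
  fun a => ((ofLex (T2 a.1 a.2)).1, (ofLex (T2 a.1 a.2)).2, a.1)

private def fFiberEquiv {n r1 r2 m1 : ℕ} (T1 : Fin r1 → Fin m1 → Lex (Fin n × Fin r2))
    (t : Fin n × Fin r1 × Fin r2) :
    {a // fBox T1 a = t} ≃ {c : Fin m1 // T1 t.2.1 c = toLex (t.1, t.2.2)} where
  toFun x := ⟨x.1.2, by
    have h1 : (ofLex (T1 x.1.1 x.1.2)).1 = t.1 := congrArg Prod.fst x.2
    have h2 : x.1.1 = t.2.1 := congrArg (fun z => z.2.1) x.2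
    have h3 : (ofLex (T1 x.1.1 x.1.2)).2 = t.2.2 := congrArg (fun z => z.2.2) x.2
    rw [← h2, ← h1, ← h3]; rfl⟩
  invFun y := ⟨(t.2.1, y.1), by
    show ((ofLex (T1 t.2.1 y.1)).1, t.2.1, (ofLex (T1 t.2.1 y.1)).2) = t
    rw [y.2]; rfl⟩
  left_inv x := by
    apply Subtype.ext
    exact Prod.ext (congrArg (fun z => z.2.1) x.2).symm rfl
  right_inv y := rfl

private def gFiberEquiv {n r1 r2 m2 : ℕ} (T2 : Fin r2 → Fin m2 → Lex (Fin n × Fin r1))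
    (t : Fin n × Fin r1 × Fin r2) :
    {b // gBox T2 b = t} ≃ {c : Fin m2 // T2 t.2.2 c = toLex (t.1, t.2.1)} where
  toFun x := ⟨x.1.2, by
    have h1 : (ofLex (T2 x.1.1 x.1.2)).1 = t.1 := congrArg Prod.fst x.2
    have h2 : (ofLex (T2 x.1.1 x.1.2)).2 = t.2.1 := congrArg (fun z => z.2.1) x.2
    have h3 : x.1.1 = t.2.2 := congrArg (fun z => z.2.2) x.2
    rw [← h3, ← h1, ← h2]; rfl⟩
  invFun y := ⟨(t.2.2, y.1), by
    show ((ofLex (T2 t.2.2 y.1)).1, (ofLex (T2 t.2.2 y.1)).2, t.2.2) = t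
    rw [y.2]; rfl⟩
  left_inv x := by
    apply Subtype.ext
    exact Prod.ext (congrArg (fun z => z.2.2) x.2).symm rfl
  right_inv y := rfl

lemma inter_sub_ss (n r1 r2 : ℕ) :
    grassVectors1 n r1 r2 ∩ grassVectors2 n r1 r2 ⊆ ssVectors n r1 r2 := by
  classical
  rintro v ⟨⟨m1, T1, hT1, hv1⟩, m2, T2, hT2, hv2⟩
  have hcard : ∀ (i : Fin n) (j : Fin r2) (k : Fin r1),
      (univ.filter fun c => T1 k c = toLex (i, j)).card
        = (univ.filter fun c => T2 j c = toLex (i, k)).card := by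
    intro i j k
    have h := (hv1 i j k).symm.trans (hv2 i j k)
    exact_mod_cast h
  have hfib : ∀ t : Fin n × Fin r1 × Fin r2,
      Fintype.card {a // fBox T1 a = t} = Fintype.card {b // gBox T2 b = t} := by
    intro t
    rw [Fintype.card_congr (fFiberEquiv T1 t), Fintype.card_congr (gFiberEquiv T2 t)]
    rw [Fintype.card_subtype, Fintype.card_subtype]
    exact hcard t.1 t.2.2 t.2.1
  let E : ∀ t, {a // fBox T1 a = t} ≃ {b // gBox T2 b = t} :=
    fun t => Fintype.equivOfCardEq (hfib t)
  let link : (Fin r1 × Fin m1) ≃ (Fin r2 × Fin m2) :=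
    ((Equiv.sigmaFiberEquiv (fBox T1)).symm.trans
      (Equiv.sigmaCongrRight E)).trans (Equiv.sigmaFiberEquiv (gBox T2))
  have hlink : ∀ a, gBox T2 (link a) = fBox T1 a := by
    intro a
    exact (E (fBox T1 a) ⟨a, rfl⟩).2
  refine ⟨m1, m2,
    { Tm := fun p c => ofLex (T1 p c)
      Tp := fun q c => ofLex (T2 q c)
      link := link
      link_row := fun p c => (congrArg (fun z => z.2.2) (hlink (p, c)))
      link_label := fun p c => Prod.ext (congrArg (fun z => z.1) (hlink (p, c)))
        (congrArg (fun z => z.2.1) (hlink (p, c))) },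
    ⟨hT1, hT2⟩, fun i j k => ?_⟩
  rw [hv2 i j k]
  norm_cast

def IsRatDecomp {ι κ : Type} [Fintype ι] (Mq : κ → ι → ℚ) (x : ι → ℝ) : Prop :=
  ∃ (d : ℕ) (cc : Fin d → ℝ) (y : Fin d → ι → ℚ),
    (∀ j, 0 ≤ cc j) ∧ (∀ j i, 0 ≤ y j i) ∧ (∀ j t, ∑ i, y j i * Mq t i = 0) ∧
    (∀ i, x i = ∑ j, cc j * ((y j i : ℚ) : ℝ))

lemma isRatDecomp_congr {ι κ : Type} [Fintype ι] {Mq : κ → ι → ℚ} {x x' : ι → ℝ}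
    (h : ∀ i, x i = x' i) (hd : IsRatDecomp Mq x') : IsRatDecomp Mq x := by
  obtain ⟨d, cc, y, h1, h2, h3, h4⟩ := hd
  exact ⟨d, cc, y, h1, h2, h3, fun i => (h i).trans (h4 i)⟩

lemma isRatDecomp_zero {ι κ : Type} [Fintype ι] (Mq : κ → ι → ℚ) {x : ι → ℝ}
    (h : ∀ i, x i = 0) : IsRatDecomp Mq x :=
  ⟨0, Fin.elim0, Fin.elim0, fun j => j.elim0, fun j => j.elim0, fun j => j.elim0,
    fun i => by simp [h i]⟩

lemma isRatDecomp_single {ι κ : Type} [Fintype ι] (Mq : κ → ι → ℚ) (w : ι → ℚ)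
    (hw : ∀ i, 0 ≤ w i) (hker : ∀ t, ∑ i, w i * Mq t i = 0) {t : ℝ} (ht : 0 ≤ t) :
    IsRatDecomp Mq (fun i => t * ((w i : ℚ) : ℝ)) :=
  ⟨1, fun _ => t, fun _ => w, fun _ => ht, fun _ => hw, fun _ => hker,
    fun i => by rw [Fin.sum_univ_one]⟩

lemma isRatDecomp_combine {ι κ : Type} [Fintype ι] {Mq : κ → ι → ℚ} {x1 x2 : ι → ℝ}
    {a b : ℝ} (ha : 0 ≤ a) (hb : 0 ≤ b) (h1 : IsRatDecomp Mq x1) (h2 : IsRatDecomp Mq x2) :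
    IsRatDecomp Mq (fun i => a * x1 i + b * x2 i) := by
  obtain ⟨d1, cc1, y1, h11, h12, h13, h14⟩ := h1
  obtain ⟨d2, cc2, y2, h21, h22, h23, h24⟩ := h2
  refine ⟨d1 + d2, Fin.append (fun j => a * cc1 j) (fun j => b * cc2 j),
    Fin.append y1 y2, ?_, ?_, ?_, ?_⟩
  · intro j
    refine Fin.addCases (fun l => ?_) (fun r => ?_) j
    · rw [Fin.append_left]; exact mul_nonneg ha (h11 l)
    · rw [Fin.append_right]; exact mul_nonneg hb (h21 r)
  · intro j
    refine Fin.addCases (fun l => ?_) (fun r => ?_) j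
    · rw [Fin.append_left]; exact h12 l
    · rw [Fin.append_right]; exact h22 r
  · intro j
    refine Fin.addCases (fun l => ?_) (fun r => ?_) j
    · rw [Fin.append_left]; exact h13 l
    · rw [Fin.append_right]; exact h23 r
  · intro i
    rw [Fin.sum_univ_add]
    simp only [Fin.append_left, Fin.append_right]
    rw [h14 i, h24 i, Finset.mul_sum, Finset.mul_sum]
    congr 1 <;> exact Finset.sum_congr rfl fun j _ => by ring

lemma peel_step {ι : Type} [Fintype ι] [DecidableEq ι]
    (x : ι → ℝ) (hx : ∀ i, 0 ≤ x i) (w : ι → ℚ)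
    (hsupp : ∀ i, x i = 0 → w i = 0)
    (hpos : ∃ i, 0 < w i) :
    ∃ (t : ℝ) (x' : ι → ℝ), 0 < t ∧ (∀ i, 0 ≤ x' i) ∧
      (∀ i, x i = x' i + t * ((w i : ℚ) : ℝ)) ∧
      (univ.filter fun i => x' i ≠ 0).card < (univ.filter fun i => x i ≠ 0).card := by
  classical
  set P : Finset ι := univ.filter fun i => 0 < w i with hP
  have hPne : P.Nonempty := by
    obtain ⟨i, hi⟩ := hpos
    exact ⟨i, by simp [hP, hi]⟩
  obtain ⟨imin, himin, hmin⟩ := Finset.exists_min_image P (fun i => x i / ((w i : ℚ) : ℝ)) hPne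
  have hwmin : (0 : ℝ) < ((w imin : ℚ) : ℝ) := by
    have : 0 < w imin := by simpa [hP] using himin
    exact_mod_cast this
  have hxmin : 0 < x imin := by
    rcases lt_or_eq_of_le (hx imin) with h | h
    · exact h
    · exfalso
      have := hsupp imin h.symm
      rw [this] at hwmin; simp at hwmin
  set t : ℝ := x imin / ((w imin : ℚ) : ℝ) with htdef
  have ht : 0 < t := div_pos hxmin hwmin
  refine ⟨t, fun i => x i - t * ((w i : ℚ) : ℝ), ht, ?_, fun i => by ring, ?_⟩
  · intro i
    rcases le_or_gt (w i) 0 with h | h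
    · have hwi : ((w i : ℚ) : ℝ) ≤ 0 := by exact_mod_cast h
      have h2 : t * ((w i : ℚ) : ℝ) ≤ 0 := mul_nonpos_of_nonneg_of_nonpos ht.le hwi
      have h3 := hx i
      show (0:ℝ) ≤ x i - t * ((w i : ℚ) : ℝ)
      linarith
    · have hiP : i ∈ P := by simp [hP, h]
      have hwi : (0 : ℝ) < ((w i : ℚ) : ℝ) := by exact_mod_cast h
      have := hmin i hiP
      rw [htdef] at *
      have h2 : t * ((w i : ℚ) : ℝ) ≤ x i := by
        rw [← le_div_iff₀ hwi]
        exact this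
      linarith
  · apply Finset.card_lt_card
    rw [Finset.ssubset_iff_of_subset]
    · refine ⟨imin, ?_, ?_⟩
      · simp only [mem_filter, mem_univ, true_and]
        exact ne_of_gt hxmin
      · simp only [mem_filter, mem_univ, true_and, not_not]
        rw [htdef]
        field_simp
        ring
    · intro i hi
      simp only [mem_filter, mem_univ, true_and] at hi ⊢
      intro hxi
      apply hi
      rw [hxi, hsupp i hxi]
      simp

set_option maxHeartbeats 1000000 in
lemma rat_cone_decomp {ι : Type} [Fintype ι] [DecidableEq ι] {κ : Type}
    (Mq : κ → ι → ℚ) (x : ι → ℝ) (hx : ∀ i, 0 ≤ x i)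
    (hker : ∀ t, ∑ i, x i * ((Mq t i : ℚ) : ℝ) = 0) :
    IsRatDecomp Mq x := by
  classical
  suffices H : ∀ (N : ℕ) (x : ι → ℝ), (∀ i, 0 ≤ x i) →
      (∀ t, ∑ i, x i * ((Mq t i : ℚ) : ℝ) = 0) →
      (univ.filter fun i => x i ≠ 0).card ≤ N → IsRatDecomp Mq x by
    exact H _ x hx hker le_rfl
  intro N
  induction N with
  | zero =>
    intro x hx hker hcard
    apply isRatDecomp_zero
    intro i
    by_contra h
    have hmem : i ∈ univ.filter (fun i => x i ≠ 0) := by simp [h]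
    have := Finset.card_pos.mpr ⟨i, hmem⟩
    omega
  | succ N ih =>
    intro x hx hker hcard
    by_cases hzero : ∀ i, x i = 0
    · exact isRatDecomp_zero Mq hzero
    push_neg at hzero
    obtain ⟨i0, hi0⟩ := hzero
    -- decompose x over a rational basis of the span of its coordinates
    have hfin : FiniteDimensional ℚ (Submodule.span ℚ (Set.range x)) :=
      FiniteDimensional.span_of_finite ℚ (Set.finite_range x)
    set V := Submodule.span ℚ (Set.range x) with hV
    set D := Module.finrank ℚ V with hD
    set b := Module.finBasis ℚ V with hb
    set xv : ι → V := fun i => ⟨x i, Submodule.subset_span (Set.mem_range_self i)⟩ with hxv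
    set z : Fin D → ι → ℚ := fun m i => b.repr (xv i) m with hzdef
    have hrecon : ∀ i, x i = ∑ m, ((z m i : ℚ) : ℝ) * ((b m : ℝ)) := by
      intro i
      have h1 : ∑ m, b.repr (xv i) m • b m = xv i := b.sum_repr (xv i)
      have h2 := congrArg (fun v : V => (v : ℝ)) h1
      simp only [AddSubmonoidClass.coe_finset_sum, SetLike.val_smul, Rat.smul_def] at h2
      exact h2.symm
    have hkerQ : ∀ (m : Fin D) (t : κ), ∑ i, z m i * Mq t i = 0 := by
      intro m t
      have h0 : (∑ i, Mq t i • xv i) = (0 : V) := by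
        apply Subtype.ext
        simp only [AddSubmonoidClass.coe_finset_sum, SetLike.val_smul, Rat.smul_def,
          ZeroMemClass.coe_zero]
        rw [← hker t]
        exact Finset.sum_congr rfl fun i _ => mul_comm _ _
      have h1 := congrArg (fun v : V => b.repr v m) h0
      simp only [map_sum, map_smul, Finsupp.coe_finset_sum, Finset.sum_apply,
        Finsupp.smul_apply, smul_eq_mul, map_zero, Finsupp.coe_zero, Pi.zero_apply] at h1
      rw [← h1]
      exact Finset.sum_congr rfl fun i _ => by rw [hzdef]; ring
    have hvan : ∀ i, x i = 0 → ∀ m, z m i = 0 := by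
      intro i hxi m
      have : xv i = 0 := Subtype.ext (by simp [hxv, hxi])
      simp [hzdef, this]
    have hm0 : ∃ m, z m i0 ≠ 0 := by
      by_contra h
      push_neg at h
      apply hi0
      rw [hrecon i0]
      simp [h]
    obtain ⟨m0, hm0⟩ := hm0
    -- kernels are preserved along shifts by kernel vectors
    have hkershift : ∀ (w : ι → ℚ), (∀ t, ∑ i, w i * Mq t i = 0) → ∀ (s : ℝ) (x' : ι → ℝ),
        (∀ i, x' i = x i + s * ((w i : ℚ) : ℝ)) → ∀ t, ∑ i, x' i * ((Mq t i : ℚ) : ℝ) = 0 := by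
      intro w hwker s x' hx' t
      have : ∀ i, x' i * ((Mq t i : ℚ) : ℝ)
          = x i * ((Mq t i : ℚ) : ℝ) + s * (((w i * Mq t i : ℚ) : ℝ)) := by
        intro i
        rw [hx' i]
        push_cast
        ring
      rw [Finset.sum_congr rfl fun i _ => this i, Finset.sum_add_distrib, hker t,
        ← Finset.mul_sum, ← Rat.cast_sum, hwker t]
      simp
    -- the case of a nonnegative peeling vector
    have mainNonneg : ∀ w : ι → ℚ, (∀ i, 0 ≤ w i) → (∀ i, x i = 0 → w i = 0) →
        (∀ t, ∑ i, w i * Mq t i = 0) → (∃ i, 0 < w i) → IsRatDecomp Mq x := by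
      intro w hwnn hwsupp hwker hwpos
      obtain ⟨t1, x', ht1, hx', hrec, hcard'⟩ := peel_step x hx w hwsupp hwpos
      have hkerx' := hkershift w hwker (-t1) x' (fun i => by have := hrec i; linarith)
      have hdx' : IsRatDecomp Mq x' := ih x' hx' hkerx' (by omega)
      refine isRatDecomp_congr (x' := fun i => 1 * x' i + 1 * (t1 * ((w i : ℚ) : ℝ))) ?_ ?_
      · intro i
        have := hrec i
        show x i = 1 * x' i + 1 * (t1 * ((w i : ℚ) : ℝ))
        linarith
      · exact isRatDecomp_combine zero_le_one zero_le_one hdx'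
          (isRatDecomp_single Mq w hwnn hwker ht1.le)
    by_cases hApos : ∃ i, 0 < z m0 i
    · by_cases hBneg : ∃ i, z m0 i < 0
      · -- mixed signs: peel in both directions
        obtain ⟨t1, x', ht1, hx', hrec1, hcard1⟩ :=
          peel_step x hx (z m0) (fun i h => hvan i h m0) hApos
        have hnegpos : ∃ i, 0 < (-(z m0)) i := by
          obtain ⟨i, hi⟩ := hBneg
          exact ⟨i, by simpa using hi⟩
        obtain ⟨t2, x'', ht2, hx'', hrec2, hcard2⟩ :=
          peel_step x hx (-(z m0)) (fun i h => by simp [hvan i h m0]) hnegpos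
        have hrec2' : ∀ i, x i = x'' i - t2 * ((z m0 i : ℚ) : ℝ) := by
          intro i
          have := hrec2 i
          simp only [Pi.neg_apply] at this
          push_cast at this
          linarith
        have hkerneg : ∀ t, ∑ i, (-(z m0)) i * Mq t i = 0 := by
          intro t
          have := hkerQ m0 t
          simp only [Pi.neg_apply, neg_mul]
          rw [Finset.sum_neg_distrib, this, neg_zero]
        have hkerx' := hkershift (z m0) (hkerQ m0) (-t1) x'
          (fun i => by have := hrec1 i; linarith)
        have hkerx'' := hkershift (z m0) (hkerQ m0) t2 x''
          (fun i => by have := hrec2' i; linarith)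
        have hdx' : IsRatDecomp Mq x' := ih x' hx' hkerx' (by omega)
        have hdx'' : IsRatDecomp Mq x'' := ih x'' hx'' hkerx'' (by omega)
        have hsum : 0 < t1 + t2 := by linarith
        refine isRatDecomp_congr
          (x' := fun i => (t2 / (t1 + t2)) * x' i + (t1 / (t1 + t2)) * x'' i) ?_ ?_
        · intro i
          have h1 := hrec1 i
          have h2 := hrec2' i
          show x i = (t2 / (t1 + t2)) * x' i + (t1 / (t1 + t2)) * x'' i
          have hne : t1 + t2 ≠ 0 := by positivity
          field_simp
          linear_combination t2 * h1 + t1 * h2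
        · exact isRatDecomp_combine (by positivity) (by positivity) hdx' hdx''
      · -- all coordinates of z m0 are nonnegative
        push_neg at hBneg
        exact mainNonneg (z m0) hBneg (fun i h => hvan i h m0) (hkerQ m0) hApos
    · -- all coordinates of z m0 are nonpositive; use the negative
      push_neg at hApos
      refine mainNonneg (-(z m0)) (fun i => by simpa using hApos i)
        (fun i h => by simp [hvan i h m0]) ?_ ?_
      · intro t
        simp only [Pi.neg_apply, neg_mul]
        rw [Finset.sum_neg_distrib, hkerQ m0 t, neg_zero]
      · refine ⟨i0, ?_⟩
        simp only [Pi.neg_apply]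
        have := hApos i0
        rcases lt_or_eq_of_le this with h | h
        · linarith
        · exact absurd h hm0

lemma clear_denom (q : ℚ) (hq : 0 ≤ q) (Nn : ℕ) (hd : q.den ∣ Nn) :
    ((Nn / q.den * q.num.toNat : ℕ) : ℚ) = (Nn : ℚ) * q := by
  obtain ⟨c, hc⟩ := hd
  subst hc
  rw [Nat.mul_div_cancel_left c q.pos]
  have hnum : (q.den : ℚ) * q = q.num := by rw [mul_comm, Rat.mul_den_eq_num]
  have h2 : ((q.num.toNat : ℕ) : ℚ) = (q.num : ℚ) := by
    exact_mod_cast congrArg (fun z : ℤ => (z : ℚ)) (Int.toNat_of_nonneg (Rat.num_nonneg.mpr hq))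
  push_cast
  rw [h2]
  linear_combination (-(c : ℚ)) * hnum


/-- The cone `C^n_{r1 r2}` generated by exponent vectors of semi-standard linked tableaux
pairs equals the intersection of the two Gelfand--Cetlin-type cones associated to the
Grassmannians `Gr(r1, n r2)` and `Gr(r2, n r1)`, under the standard lattice
identifications. -/
theorem stmt6 (n r1 r2 : ℕ) :
    (ssCone n r1 r2 : Set (RV n r1 r2)) =
      (grassCone1 n r1 r2 : Set (RV n r1 r2)) ∩ (grassCone2 n r1 r2 : Set (RV n r1 r2)) := by
  classical
  apply subset_antisymm
  · intro v hv
    simp only [Set.mem_inter_iff, SetLike.mem_coe] at *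
    exact ⟨Submodule.span_mono (ss_sub_gv1 n r1 r2) hv,
      Submodule.span_mono (ss_sub_gv2 n r1 r2) hv⟩
  · rintro v ⟨hv1, hv2⟩
    simp only [SetLike.mem_coe] at hv1 hv2 ⊢
    obtain ⟨n1, f1, g1, hsum1⟩ := (Submodule.mem_span_set' (R := {c : ℝ // 0 ≤ c}) (M := RV n r1 r2)).mp hv1
    obtain ⟨n2, f2, g2, hsum2⟩ := (Submodule.mem_span_set' (R := {c : ℝ // 0 ≤ c}) (M := RV n r1 r2)).mp hv2
    have hsum1' : ∑ s : Fin n1, ((f1 s : ℝ)) • (g1 s : RV n r1 r2) = v := hsum1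
    have hsum2' : ∑ s : Fin n2, ((f2 s : ℝ)) • (g2 s : RV n r1 r2) = v := hsum2
    -- rational entries of the generators
    have hQ1 : ∀ s : Fin n1, ∃ q : (Fin n) × (Fin r2) × (Fin r1) → ℚ,
        ∀ t, (g1 s : RV n r1 r2) t.1 t.2.1 t.2.2 = ((q t : ℚ) : ℝ) := by
      intro s
      obtain ⟨m, T, hT, hvv⟩ := (g1 s).2
      refine ⟨fun t => ((univ.filter fun c => T t.2.2 c = toLex (t.1, t.2.1)).card : ℚ),
        fun t => ?_⟩
      rw [hvv t.1 t.2.1 t.2.2]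
      push_cast
      try rfl
    have hQ2 : ∀ s : Fin n2, ∃ q : (Fin n) × (Fin r2) × (Fin r1) → ℚ,
        ∀ t, (g2 s : RV n r1 r2) t.1 t.2.1 t.2.2 = ((q t : ℚ) : ℝ) := by
      intro s
      obtain ⟨m, T, hT, hvv⟩ := (g2 s).2
      refine ⟨fun t => ((univ.filter fun c => T t.2.1 c = toLex (t.1, t.2.2)).card : ℚ),
        fun t => ?_⟩
      rw [hvv t.1 t.2.1 t.2.2]
      push_cast
      try rfl
    choose q1 hq1 using hQ1
    choose q2 hq2 using hQ2
    set Mq : (Fin n) × (Fin r2) × (Fin r1) → (Fin n1 ⊕ Fin n2) → ℚ :=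
      fun t i => Sum.elim (fun s => q1 s t) (fun s => - q2 s t) i with hMq
    set x : (Fin n1 ⊕ Fin n2) → ℝ :=
      Sum.elim (fun s => ((f1 s : ℝ))) (fun s => ((f2 s : ℝ))) with hxdef
    have hxnn : ∀ i, 0 ≤ x i := by
      rintro (s | s)
      · exact (f1 s).2
      · exact (f2 s).2
    -- pointwise evaluation of the two representations of v
    have hv1t : ∀ t : (Fin n) × (Fin r2) × (Fin r1),
        v t.1 t.2.1 t.2.2 = ∑ s : Fin n1, ((f1 s : ℝ)) * (g1 s : RV n r1 r2) t.1 t.2.1 t.2.2 := by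
      intro t
      rw [← hsum1']
      simp [Finset.sum_apply, Pi.smul_apply, smul_eq_mul]
      rfl
    have hv2t : ∀ t : (Fin n) × (Fin r2) × (Fin r1),
        v t.1 t.2.1 t.2.2 = ∑ s : Fin n2, ((f2 s : ℝ)) * (g2 s : RV n r1 r2) t.1 t.2.1 t.2.2 := by
      intro t
      rw [← hsum2']
      simp [Finset.sum_apply, Pi.smul_apply, smul_eq_mul]
      rfl
    have hkerx : ∀ t, ∑ i, x i * ((Mq t i : ℚ) : ℝ) = 0 := by
      intro t
      rw [Fintype.sum_sum_type]
      have hL : ∑ s : Fin n1, x (Sum.inl s) * ((Mq t (Sum.inl s) : ℚ) : ℝ)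
          = ∑ s : Fin n1, ((f1 s : ℝ)) * (g1 s : RV n r1 r2) t.1 t.2.1 t.2.2 := by
        refine Finset.sum_congr rfl fun s _ => ?_
        simp only [hMq, hxdef, Sum.elim_inl]
        rw [hq1 s t]
      have hR : ∑ s : Fin n2, x (Sum.inr s) * ((Mq t (Sum.inr s) : ℚ) : ℝ)
          = -∑ s : Fin n2, ((f2 s : ℝ)) * (g2 s : RV n r1 r2) t.1 t.2.1 t.2.2 := by
        rw [← Finset.sum_neg_distrib]
        refine Finset.sum_congr rfl fun s _ => ?_
        simp only [hMq, hxdef, Sum.elim_inr, Rat.cast_neg, mul_neg]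
        rw [hq2 s t]
        try ring
      rw [hL, hR, ← hv1t t, ← hv2t t]
      ring
    obtain ⟨d, cc, y, hcc, hynn, hyker, hyrec⟩ := rat_cone_decomp Mq x hxnn hkerx
    -- clear denominators
    have hdenom : ∀ j : Fin d, ∃ (Nj : ℕ) (kf : (Fin n1 ⊕ Fin n2) → ℕ), 0 < Nj ∧
        ∀ i, ((kf i : ℕ) : ℚ) = (Nj : ℚ) * y j i := by
      intro j
      refine ⟨∏ i, (y j i).den,
        fun i => (∏ i, (y j i).den) / (y j i).den * (y j i).num.toNat,
        Finset.prod_pos (fun i _ => (y j i).pos), fun i => ?_⟩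
      exact clear_denom (y j i) (hynn j i) _ (Finset.dvd_prod_of_mem _ (mem_univ i))
    choose Nj kf hNj hkf using hdenom
    -- the integral common vectors
    set W : Fin d → RV n r1 r2 :=
      fun j => ∑ s : Fin n1, ((kf j (Sum.inl s) : ℕ) : ℝ) • (g1 s : RV n r1 r2) with hWdef
    have hW1 : ∀ j, W j ∈ grassVectors1 n r1 r2 := by
      intro j
      have hrw : W j = ∑ s : Fin n1, (kf j (Sum.inl s)) • (g1 s : RV n r1 r2) := by
        rw [hWdef]
        exact Finset.sum_congr rfl fun s _ => by rw [Nat.cast_smul_eq_nsmul]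
      rw [hrw]
      exact mem_of_sum_nsmul (grassVectors1_zero n r1 r2)
        (fun a ha b hb => grassVectors1_add ha hb) _ _ (fun s => (g1 s).2)
    -- the same vector as a combination of type 2 generators
    have hW2eq : ∀ j, W j = ∑ s : Fin n2, ((kf j (Sum.inr s) : ℕ) : ℝ) • (g2 s : RV n r1 r2) := by
      intro j
      funext ci cj ck
      set t : (Fin n) × (Fin r2) × (Fin r1) := (ci, cj, ck) with htdef
      have hk2 : ∑ i, ((kf j i : ℚ)) * Mq t i = 0 := by
        rw [Finset.sum_congr rfl (fun i _ => by rw [hkf j i, mul_assoc]), ← Finset.mul_sum,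
          hyker j t, mul_zero]
      rw [Fintype.sum_sum_type] at hk2
      have hk3 := congrArg (fun r : ℚ => (r : ℝ)) hk2
      push_cast at hk3
      -- hk3 : ∑ s, kf(inl s) * q1 s t + ∑ s, kf(inr s) * (- q2 s t) = 0 over ℝ
      have hL : ∀ s : Fin n1, ((kf j (Sum.inl s) : ℝ)) * ((q1 s t : ℚ) : ℝ)
          = ((kf j (Sum.inl s) : ℝ)) * (g1 s : RV n r1 r2) ci cj ck := by
        intro s
        rw [← hq1 s t]
      have hR : ∀ s : Fin n2, ((kf j (Sum.inr s) : ℝ)) * ((q2 s t : ℚ) : ℝ)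
          = ((kf j (Sum.inr s) : ℝ)) * (g2 s : RV n r1 r2) ci cj ck := by
        intro s
        rw [← hq2 s t]
      -- evaluate both sides
      have hWv : W j ci cj ck = ∑ s : Fin n1, ((kf j (Sum.inl s) : ℝ)) * (g1 s : RV n r1 r2) ci cj ck := by
        rw [hWdef]
        simp [Finset.sum_apply, Pi.smul_apply, smul_eq_mul]
      have hW2v : (∑ s : Fin n2, ((kf j (Sum.inr s) : ℕ) : ℝ) • (g2 s : RV n r1 r2)) ci cj ck
          = ∑ s : Fin n2, ((kf j (Sum.inr s) : ℝ)) * (g2 s : RV n r1 r2) ci cj ck := by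
        simp [Finset.sum_apply, Pi.smul_apply, smul_eq_mul]
      rw [hWv, hW2v]
      rw [Finset.sum_congr rfl (fun s _ => (hL s).symm),
        Finset.sum_congr rfl (fun s _ => (hR s).symm)]
      -- use hk3
      simp only [hMq, Sum.elim_inl, Sum.elim_inr] at hk3
      push_cast at hk3
      simp only [mul_neg] at hk3
      rw [Finset.sum_neg_distrib] at hk3
      linarith [hk3]
    have hW2 : ∀ j, W j ∈ grassVectors2 n r1 r2 := by
      intro j
      have hrw : W j = ∑ s : Fin n2, (kf j (Sum.inr s)) • (g2 s : RV n r1 r2) := by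
        rw [hW2eq j]
        exact Finset.sum_congr rfl fun s _ => by rw [Nat.cast_smul_eq_nsmul]
      rw [hrw]
      exact mem_of_sum_nsmul (grassVectors2_zero n r1 r2)
        (fun a ha b hb => grassVectors2_add ha hb) _ _ (fun s => (g2 s).2)
    have hWss : ∀ j, W j ∈ ssVectors n r1 r2 := fun j =>
      inter_sub_ss n r1 r2 ⟨hW1 j, hW2 j⟩
    -- final identity : v = ∑ j, (cc j / Nj j) • W j
    have hfinal : v = ∑ j, (cc j / ((Nj j : ℕ) : ℝ)) • W j := by
      funext ci cj ck
      set t : (Fin n) × (Fin r2) × (Fin r1) := (ci, cj, ck) with htdef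
      have hRHS : (∑ j, (cc j / ((Nj j : ℕ) : ℝ)) • W j) ci cj ck
          = ∑ j, (cc j / ((Nj j : ℕ) : ℝ)) * (W j ci cj ck) := by
        simp [Finset.sum_apply, Pi.smul_apply, smul_eq_mul]
      rw [hRHS]
      have hWval : ∀ j, W j ci cj ck
          = ∑ s : Fin n1, ((Nj j : ℝ) * ((y j (Sum.inl s) : ℚ) : ℝ)) * (g1 s : RV n r1 r2) ci cj ck := by
        intro j
        rw [hWdef]
        simp only [Finset.sum_apply, Pi.smul_apply, smul_eq_mul]
        refine Finset.sum_congr rfl fun s _ => ?_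
        have := hkf j (Sum.inl s)
        have hcast : ((kf j (Sum.inl s) : ℕ) : ℝ) = (Nj j : ℝ) * ((y j (Sum.inl s) : ℚ) : ℝ) := by
          exact_mod_cast congrArg (fun z : ℚ => (z : ℝ)) this
        rw [hcast]
      have hstep : ∀ j, (cc j / ((Nj j : ℕ) : ℝ)) * (W j ci cj ck)
          = ∑ s : Fin n1, cc j * ((y j (Sum.inl s) : ℚ) : ℝ) * (g1 s : RV n r1 r2) ci cj ck := by
        intro j
        rw [hWval j, Finset.mul_sum]
        refine Finset.sum_congr rfl fun s _ => ?_
        have hNne : ((Nj j : ℕ) : ℝ) ≠ 0 := by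
          exact_mod_cast (hNj j).ne'
        field_simp
        try ring
      rw [Finset.sum_congr rfl fun j _ => hstep j, Finset.sum_comm]
      rw [hv1t t]
      refine Finset.sum_congr rfl fun s _ => ?_
      rw [show ((f1 s : ℝ)) = x (Sum.inl s) from rfl, hyrec (Sum.inl s), Finset.sum_mul]
    rw [hfinal]
    apply Submodule.sum_mem
    intro j _
    have hsc : (0:ℝ) ≤ cc j / ((Nj j : ℕ) : ℝ) := by
      apply div_nonneg (hcc j)
      positivity
    exact Submodule.smul_mem _ (⟨_, hsc⟩ : {c : ℝ // 0 ≤ c})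
      (Submodule.subset_span (hWss j))
end

section
/- For r1 = 1 (or r2 = 1), every semi-standard linked tableaux pair is determined by a single semi-standard Young tableau of rectangular shape r × k with entries in {1,…,N} (where r = r2, N = n·r1 or symmetrically), and the cone C^n_{1 r} is generated by its height-1 lattice points, which correspond to the N-choose-r column tableaux (size r subsets of {1,…,N}). -/
open scoped BigOperators

/-- Exponent vectors of semi-standard Young tableaux of rectangular shape `r × k`
(any `k`) with entries in `Fin N`: `v e j` counts the entries `e` in row `j`. -/
def grVectors (N r : ℕ) : Set (Fin N → Fin r → ℝ) :=
  {v | ∃ (k : ℕ) (T : Fin r → Fin k → Fin N), IsSSYT T ∧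
        ∀ e j, v e j = ((Finset.univ.filter fun c => T j c = e).card : ℝ)}

/-- Exponent vectors of single-column semi-standard tableaux, i.e. of strictly increasing
`r`-subsets of `Fin N`. -/
def grColVectors (N r : ℕ) : Set (Fin N → Fin r → ℝ) :=
  {v | ∃ (T : Fin r → Fin 1 → Fin N), IsSSYT T ∧
        ∀ e j, v e j = ((Finset.univ.filter fun c => T j c = e).card : ℝ)}

private lemma mono_eq_of_multiset {α : Type*} [LinearOrder α] {c : ℕ} (f g : Fin c → α)
    (hf : Monotone f) (hg : Monotone g)
    (h : Multiset.map f Finset.univ.val = Multiset.map g Finset.univ.val) : f = g := by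
  have hl : List.ofFn f = List.ofFn g := by
    apply List.Perm.eq_of_sortedLE hf.sortedLE_ofFn hg.sortedLE_ofFn
    rw [← Multiset.coe_eq_coe]
    have : (Finset.univ.val : Multiset (Fin c)) = ↑(List.finRange c) := rfl
    simpa [List.ofFn_eq_map, this] using h
  exact List.ofFn_injective hl

private lemma tm_multiset {n r2 c1 c2 : ℕ} (P : LinkedPair n 1 r2 c1 c2) :
    Multiset.map (fun c => toLex (P.Tm 0 c)) Finset.univ.val =
      Multiset.map (fun x : Fin r2 × Fin c2 => toLex ((P.Tp x.1 x.2).1, x.1))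
        Finset.univ.val := by
  set F := fun x : Fin r2 × Fin c2 => toLex ((P.Tp x.1 x.2).1, x.1) with hF
  let e0 : Fin c1 ≃ Fin 1 × Fin c1 :=
    { toFun := fun c => (0, c)
      invFun := Prod.snd
      left_inv := fun c => rfl
      right_inv := fun x => Prod.ext (Subsingleton.elim _ _) rfl }
  set e : Fin c1 ≃ Fin r2 × Fin c2 := e0.trans P.link with he
  have key : ∀ c, toLex (P.Tm 0 c) = F (e c) := by
    intro c
    have h1 := P.link_row 0 c
    have h2 := P.link_label 0 c
    show toLex (P.Tm 0 c) = toLex ((P.Tp (P.link (0, c)).1 (P.link (0, c)).2).1, (P.link (0, c)).1)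
    rw [h2, h1]
  have huniv : Multiset.map (⇑e) Finset.univ.val = Finset.univ.val := by
    simpa using congrArg Finset.val (Finset.map_univ_equiv e)
  calc Multiset.map (fun c => toLex (P.Tm 0 c)) Finset.univ.val
      = Multiset.map (F ∘ ⇑e) Finset.univ.val := by
        apply Multiset.map_congr rfl
        intro c _
        exact key c
    _ = Multiset.map F (Multiset.map (⇑e) Finset.univ.val) := by
        rw [Multiset.map_map]
    _ = Multiset.map F Finset.univ.val := by rw [huniv]


/-- For `r1 = 1`, every semi-standard linked tableaux pair is determined by the single
tableau `T⁺`; and the Grassmannian cone `C^n_{1 r}` is generated by its height-1 lattice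
points, which are exactly the column vectors corresponding to size-`r` subsets
(strictly increasing sequences) in `{1, …, N}`. -/
theorem stmt16 (n r2 : ℕ) :
    (∀ (c1 c2 : ℕ) (P Q : LinkedPair n 1 r2 c1 c2), P.SemiStandard → Q.SemiStandard →
      P.Tp = Q.Tp → P.Tm = Q.Tm) ∧
    (∀ N r : ℕ,
      Submodule.span {c : ℝ // 0 ≤ c} (grVectors N r) =
        Submodule.span {c : ℝ // 0 ≤ c} (grColVectors N r) ∧
      grColVectors N r = {v | ∃ f : Fin r → Fin N, StrictMono f ∧
        ∀ e j, v e j = if f j = e then 1 else 0}) := by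
  constructor
  · intro c1 c2 P Q hP hQ hTp
    have hfg : (fun c => toLex (P.Tm 0 c)) = (fun c => toLex (Q.Tm 0 c)) := by
      apply mono_eq_of_multiset _ _ (hP.1.1 0) (hQ.1.1 0)
      rw [tm_multiset P, tm_multiset Q, hTp]
    funext p c
    have hp : p = 0 := Subsingleton.elim _ _
    subst hp
    exact toLex.injective (congrFun hfg c)
  · intro N r
    constructor
    · apply le_antisymm
      · rw [Submodule.span_le]
        rintro v ⟨k, T, hT, hv⟩
        have hsum : v = ∑ c : Fin k, (fun e j => if T j c = e then (1 : ℝ) else 0) := by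
          funext e j
          rw [hv, Finset.card_filter]
          push_cast
          simp [Finset.sum_apply]
        rw [hsum]
        apply Submodule.sum_mem
        intro c _
        apply Submodule.subset_span
        refine ⟨fun j _ => T j c, ⟨fun j a b _ => le_of_eq rfl, fun c' => hT.2 c⟩, ?_⟩
        intro e j
        by_cases h : T j c = e <;> simp [h]
      · exact Submodule.span_mono fun v ⟨T, hT, hv⟩ => ⟨1, T, hT, hv⟩
    · ext v
      constructor
      · rintro ⟨T, hT, hv⟩
        refine ⟨fun j => T j 0, hT.2 0, ?_⟩
        intro e j
        rw [hv]
        by_cases h : T j 0 = e <;> simp [Finset.filter_singleton, h]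
      · rintro ⟨f, hf, hv⟩
        refine ⟨fun j _ => f j, ⟨fun j a b _ => le_of_eq rfl, fun c => hf⟩, ?_⟩
        intro e j
        rw [hv]
        by_cases h : f j = e <;> simp [Finset.filter_singleton, h]
end
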